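/- arXiv:2009.10346 — 5 statements merged into one kernel-verified Lean document; each statement's English description precedes it below -/
import Mathlib

section
/- Let X be a complex normed space and Y a complex Banach space, and let s be a fixed nonzero complex number with |s| < 1. If a mapping f : X³ → Y satisfies f(0, z, a) = f(x, 0, a) = f(x, z, 0) = 0 for all x, z, a ∈ X and the inequality ‖D₁f(x, y, z, w, a, b)‖ ≤ ‖s · D₂f(x, y, z, w, a, b)‖ for all x, y, z, w, a, b ∈ X, then f is tri-additive. -/
/-- A mapping `f : X³ → Y` is *tri-additive* if it is additive in each variable. -/
def TriAdditive {X Y : Type*} [AddCommGroup X] [AddCommGroup Y]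
    (f : X → X → X → Y) : Prop :=
  (∀ x x' z a : X, f (x + x') z a = f x z a + f x' z a) ∧
  (∀ x z z' a : X, f x (z + z') a = f x z a + f x z' a) ∧
  (∀ x z a a' : X, f x z (a + a') = f x z a + f x z a')

/-- A mapping `f : X³ → Y` is *ℂ-trilinear* if it is ℂ-linear in each variable. -/
def CTrilinear {X Y : Type*} [AddCommGroup X] [Module ℂ X] [AddCommGroup Y] [Module ℂ Y]
    (f : X → X → X → Y) : Prop :=
  TriAdditive f ∧
  (∀ (c : ℂ) (x z a : X), f (c • x) z a = c • f x z a) ∧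
  (∀ (c : ℂ) (x z a : X), f x (c • z) a = c • f x z a) ∧
  (∀ (c : ℂ) (x z a : X), f x z (c • a) = c • f x z a)

/-- `D₁f(x, y, z, w, a, b)`. -/
def D₁ {X Y : Type*} [AddCommGroup X] [Module ℂ X] [AddCommGroup Y] [Module ℂ Y]
    (f : X → X → X → Y) (x y z w a b : X) : Y :=
  f (x + y) (z - w) (a + b) + f (x - y) (z + w) (a - b)
    - (2 : ℂ) • f x z a + (2 : ℂ) • f x w b - (2 : ℂ) • f y z b + (2 : ℂ) • f y w a

/-- `D₂f(x, y, z, w, a, b)`. -/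
noncomputable def D₂ {X Y : Type*} [AddCommGroup X] [Module ℂ X] [AddCommGroup Y] [Module ℂ Y]
    (f : X → X → X → Y) (x y z w a b : X) : Y :=
  (2 : ℂ) • f ((2 : ℂ)⁻¹ • (x + y)) (z - w) (a + b)
    + (2 : ℂ) • f ((2 : ℂ)⁻¹ • (x - y)) (z + w) (a - b)
    - (2 : ℂ) • f x z a + (2 : ℂ) • f x w b - (2 : ℂ) • f y z b + (2 : ℂ) • f y w a

variable {X Y : Type*} [NormedAddCommGroup X] [NormedSpace ℂ X]
  [NormedAddCommGroup Y] [NormedSpace ℂ Y] [CompleteSpace Y]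

theorem stmt_0 (s : ℂ) (hs0 : s ≠ 0) (hs1 : ‖s‖ < 1) (f : X → X → X → Y)
    (hzero : ∀ x z a : X, f 0 z a = 0 ∧ f x 0 a = 0 ∧ f x z 0 = 0)
    (hineq : ∀ x y z w a b : X, ‖D₁ f x y z w a b‖ ≤ ‖s • D₂ f x y z w a b‖) :
    TriAdditive f := by
  have hz1 : ∀ z a : X, f 0 z a = 0 := fun z a => (hzero 0 z a).1
  have hz2 : ∀ x a : X, f x 0 a = 0 := fun x a => (hzero x 0 a).2.1
  have hz3 : ∀ x z : X, f x z 0 = 0 := fun x z => (hzero x z 0).2.2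
  have hcontr : ∀ T : Y, ‖T‖ ≤ ‖s • T‖ → T = 0 := by
    intro T hT
    rw [norm_smul] at hT
    by_contra hne
    have hpos : 0 < ‖T‖ := norm_pos_iff.mpr hne
    nlinarith
  have hhalf : ∀ u : X, (2:ℂ)⁻¹ • u + (2:ℂ)⁻¹ • u = u := by
    intro u; rw [← add_smul]; norm_num
  -- doubling in the first variable
  have hdouble : ∀ x z a : X, f (x + x) z a = (2:ℂ) • f x z a := by
    intro x z a
    have h := hineq x x z 0 a 0
    have hxx : (2:ℂ)⁻¹ • (x + x) = x := by rw [smul_add, hhalf]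
    have hD2 : D₂ f x x z 0 a 0 = 0 := by
      simp [D₂, hxx, sub_self, hz1, hz2, hz3]
    rw [hD2, smul_zero, norm_zero] at h
    have hD1 : D₁ f x x z 0 a 0 = 0 := norm_le_zero_iff.mp h
    have : f (x + x) z a - (2:ℂ) • f x z a = 0 := by
      rw [← hD1]; simp [D₁, hz1, hz2, hz3]
    exact sub_eq_zero.mp this
  have hhalfval : ∀ u z a : X, (2:ℂ) • f ((2:ℂ)⁻¹ • u) z a = f u z a := by
    intro u z a; rw [← hdouble, hhalf]
  -- Jensen in the first variable
  have hJ1 : ∀ x y z a : X, f (x + y) z a + f (x - y) z a = (2:ℂ) • f x z a := by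
    intro x y z a
    have h := hineq x y z 0 a 0
    have e1 : D₁ f x y z 0 a 0
        = f (x + y) z a + f (x - y) z a - (2:ℂ) • f x z a := by
      simp [D₁, hz1, hz2, hz3]
    have e2 : D₂ f x y z 0 a 0
        = f (x + y) z a + f (x - y) z a - (2:ℂ) • f x z a := by
      simp only [D₂, add_zero, sub_zero, hhalfval, hz1, hz2, hz3, smul_zero]
    rw [e1, e2] at h
    exact sub_eq_zero.mp (hcontr _ h)
  have add1 : ∀ p q z a : X, f (p + q) z a = f p z a + f q z a := by
    intro p q z a
    have h := hJ1 ((2:ℂ)⁻¹ • (p + q)) ((2:ℂ)⁻¹ • (p - q)) z a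
    have e1 : (2:ℂ)⁻¹ • (p + q) + (2:ℂ)⁻¹ • (p - q) = p := by module
    have e2 : (2:ℂ)⁻¹ • (p + q) - (2:ℂ)⁻¹ • (p - q) = q := by module
    rw [e1, e2, hhalfval] at h
    exact h.symm
  -- Jensen in the second variable
  have hJ2 : ∀ x z w a : X, f x (z - w) a + f x (z + w) a = (2:ℂ) • f x z a := by
    intro x z w a
    have h := hineq x 0 z w a 0
    have e1 : D₁ f x 0 z w a 0
        = f x (z - w) a + f x (z + w) a - (2:ℂ) • f x z a := by
      simp [D₁, hz1, hz2, hz3]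
    have e2 : D₂ f x 0 z w a 0
        = f x (z - w) a + f x (z + w) a - (2:ℂ) • f x z a := by
      simp [D₂, hz1, hz2, hz3, hhalfval]
    rw [e1, e2] at h
    exact sub_eq_zero.mp (hcontr _ h)
  have hdouble2 : ∀ x z a : X, f x (z + z) a = (2:ℂ) • f x z a := by
    intro x z a
    have h := hJ2 x z z a
    rw [sub_self, hz2, zero_add] at h
    exact h
  have hhalfval2 : ∀ x u a : X, (2:ℂ) • f x ((2:ℂ)⁻¹ • u) a = f x u a := by
    intro x u a; rw [← hdouble2, hhalf]
  have add2 : ∀ x p q a : X, f x (p + q) a = f x p a + f x q a := by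
    intro x p q a
    have h := hJ2 x ((2:ℂ)⁻¹ • (p + q)) ((2:ℂ)⁻¹ • (q - p)) a
    have e1 : (2:ℂ)⁻¹ • (p + q) - (2:ℂ)⁻¹ • (q - p) = p := by module
    have e2 : (2:ℂ)⁻¹ • (p + q) + (2:ℂ)⁻¹ • (q - p) = q := by module
    rw [e1, e2, hhalfval2] at h
    exact h.symm
  -- Jensen in the third variable
  have hJ3 : ∀ x z a b : X, f x z (a + b) + f x z (a - b) = (2:ℂ) • f x z a := by
    intro x z a b
    have h := hineq x 0 z 0 a b
    have e1 : D₁ f x 0 z 0 a b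
        = f x z (a + b) + f x z (a - b) - (2:ℂ) • f x z a := by
      simp [D₁, hz1, hz2, hz3]
    have e2 : D₂ f x 0 z 0 a b
        = f x z (a + b) + f x z (a - b) - (2:ℂ) • f x z a := by
      simp [D₂, hz1, hz2, hz3, hhalfval]
    rw [e1, e2] at h
    exact sub_eq_zero.mp (hcontr _ h)
  have hdouble3 : ∀ x z a : X, f x z (a + a) = (2:ℂ) • f x z a := by
    intro x z a
    have h := hJ3 x z a a
    rw [sub_self, hz3, add_zero] at h
    exact h
  have hhalfval3 : ∀ x z u : X, (2:ℂ) • f x z ((2:ℂ)⁻¹ • u) = f x z u := by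
    intro x z u; rw [← hdouble3, hhalf]
  have add3 : ∀ x z p q : X, f x z (p + q) = f x z p + f x z q := by
    intro x z p q
    have h := hJ3 x z ((2:ℂ)⁻¹ • (p + q)) ((2:ℂ)⁻¹ • (p - q))
    have e1 : (2:ℂ)⁻¹ • (p + q) + (2:ℂ)⁻¹ • (p - q) = p := by module
    have e2 : (2:ℂ)⁻¹ • (p + q) - (2:ℂ)⁻¹ • (p - q) = q := by module
    rw [e1, e2, hhalfval3] at h
    exact h.symm
  exact ⟨add1, fun x z z' a => add2 x z z' a, fun x z a a' => add3 x z a a'⟩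
end

section
/- Let X be a complex normed space, Y a complex Banach space, s a fixed nonzero complex number with |s| < 1, r > 1 a real number, and θ ≥ 0. Suppose f : X³ → Y satisfies f(x, 0, a) = f(0, z, a) = f(x, z, 0) = 0 for all x, z, a ∈ X and ‖D₁f(x, y, z, w, a, b)‖ ≤ ‖s · D₂f(x, y, z, w, a, b)‖ + θ(‖x‖^r + ‖y‖^r)(‖z‖^r + ‖w‖^r)(‖a‖^r + ‖b‖^r) for all x, y, z, w, a, b ∈ X. Then there exists a unique tri-additive mapping L : X³ → Y such that ‖f(x, z, a) − L(x, z, a)‖ ≤ (2θ/(2^r − 2)) ‖x‖^r ‖z‖^r ‖a‖^r for all x, z, a ∈ X. -/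
open Filter Topology

variable {X Y : Type*} [NormedAddCommGroup X] [NormedSpace ℂ X]
  [NormedAddCommGroup Y] [NormedSpace ℂ Y] [CompleteSpace Y]

private lemma rpow_two_mul_inv (r : ℝ) : (2:ℝ) * ((2:ℝ)⁻¹) ^ r = (2:ℝ) ^ ((1:ℝ) - r) := by
  rw [Real.rpow_sub (by norm_num), Real.rpow_one, Real.inv_rpow (by norm_num), div_eq_mul_inv]

private lemma rpow_helper1 (r : ℝ) (n : ℕ) :
    (2:ℝ)^n * (((2:ℝ)⁻¹^n : ℝ)) ^ r = ((2:ℝ) ^ ((1:ℝ) - r)) ^ n := by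
  induction n with
  | zero => simp
  | succ n ih =>
    have h2 : (0:ℝ) ≤ (2:ℝ)⁻¹^n := by positivity
    rw [pow_succ, pow_succ, pow_succ, Real.mul_rpow h2 (by norm_num), ← ih,
      ← rpow_two_mul_inv r]
    ring

private lemma rpow_helper2 (r : ℝ) (n : ℕ) :
    (2:ℝ)^n * (((2:ℝ)⁻¹^(n+1) : ℝ)) ^ r
      = (2:ℝ) ^ (-r) * ((2:ℝ) ^ ((1:ℝ) - r)) ^ n := by
  have h2 : (0:ℝ) ≤ (2:ℝ)⁻¹^n := by positivity
  rw [pow_succ, Real.mul_rpow h2 (by norm_num), ← mul_assoc, rpow_helper1,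
    Real.inv_rpow (by norm_num), ← Real.rpow_neg (by norm_num)]
  ring

private lemma norm_eq_zero_of_le_smul {Y : Type*} [NormedAddCommGroup Y] {s : ℂ}
    (hs1 : ‖s‖ < 1) {T : Y} (h : ‖T‖ ≤ ‖s‖ * ‖T‖) : T = 0 := by
  have h0 := norm_nonneg T
  have hs := norm_nonneg s
  have : ‖T‖ ≤ 0 := by nlinarith
  exact norm_le_zero_iff.mp this

private lemma additive_of_jensen {X Y : Type*} [AddCommGroup X] [Module ℂ X]
    [AddCommGroup Y] [Module ℂ Y] {M : X → Y} (h0 : M 0 = 0)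
    (hJ : ∀ u v, M (u + v) + M (u - v) = (2:ℂ) • M u) :
    ∀ u v, M (u + v) = M u + M v := by
  have hdbl : ∀ u, M (u + u) = (2:ℂ) • M u := by
    intro u
    have := hJ u u
    simpa [h0] using this
  intro u v
  have e1 : (2:ℂ)⁻¹ • (u + v) + (2:ℂ)⁻¹ • (u - v) = u := by
    match_scalars <;> norm_num
  have e2 : (2:ℂ)⁻¹ • (u + v) - (2:ℂ)⁻¹ • (u - v) = v := by
    match_scalars <;> norm_num
  have e3 : (2:ℂ)⁻¹ • (u + v) + (2:ℂ)⁻¹ • (u + v) = u + v := by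
    match_scalars <;> norm_num
  have h1 := hJ ((2:ℂ)⁻¹ • (u + v)) ((2:ℂ)⁻¹ • (u - v))
  rw [e1, e2] at h1
  have h2 := hdbl ((2:ℂ)⁻¹ • (u + v))
  rw [e3] at h2
  rw [h2, ← h1]

/-- The Hyers approximation sequence. -/
private noncomputable def appr (f : X → X → X → Y) (x z a : X) (n : ℕ) : Y :=
  (2:ℂ)^n • f ((2:ℂ)⁻¹^n • x) z a

/-- The candidate tri-additive map. -/
private noncomputable def Lim (f : X → X → X → Y) (x z a : X) : Y :=
  limUnder atTop (appr f x z a)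

theorem stmt_1 (s : ℂ) (hs0 : s ≠ 0) (hs1 : ‖s‖ < 1) (r θ : ℝ) (hr : 1 < r) (hθ : 0 ≤ θ)
    (f : X → X → X → Y)
    (hzero : ∀ x z a : X, f x 0 a = 0 ∧ f 0 z a = 0 ∧ f x z 0 = 0)
    (hineq : ∀ x y z w a b : X,
      ‖D₁ f x y z w a b‖ ≤ ‖s • D₂ f x y z w a b‖
        + θ * (‖x‖ ^ r + ‖y‖ ^ r) * (‖z‖ ^ r + ‖w‖ ^ r) * (‖a‖ ^ r + ‖b‖ ^ r)) :
    ∃! L : X → X → X → Y, TriAdditive L ∧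
      ∀ x z a : X, ‖f x z a - L x z a‖ ≤ 2 * θ / ((2 : ℝ) ^ r - 2) * (‖x‖ ^ r * ‖z‖ ^ r * ‖a‖ ^ r) := by
  have hz1 : ∀ x a : X, f x 0 a = 0 := fun x a => (hzero x 0 a).1
  have hz2 : ∀ z a : X, f 0 z a = 0 := fun z a => (hzero 0 z a).2.1
  have hz3 : ∀ x z : X, f x z 0 = 0 := fun x z => (hzero x z 0).2.2
  have hz0r : ‖(0:X)‖ ^ r = 0 := by
    rw [norm_zero]; exact Real.zero_rpow (by linarith)
  set ρ : ℝ := (2:ℝ) ^ ((1:ℝ) - r) with hρdef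
  have hρ0 : 0 < ρ := Real.rpow_pos_of_pos (by norm_num) _
  have hρ : ρ < 1 := Real.rpow_lt_one_of_one_lt_of_neg (by norm_num) (by linarith)
  have h2r2 : (2:ℝ) < (2:ℝ) ^ r := by
    calc (2:ℝ) = (2:ℝ) ^ (1:ℝ) := (Real.rpow_one 2).symm
    _ < (2:ℝ) ^ r := Real.rpow_lt_rpow_left_iff (by norm_num) |>.mpr hr
  -- scalar manipulation helpers
  have h2half : ∀ x : X, (2:ℂ)⁻¹ • (x + x) = x := by
    intro x; match_scalars <;> norm_num
  have hhalfpow : ∀ (n : ℕ) (w : X), (2:ℂ)⁻¹ • ((2:ℂ)⁻¹^n • w) = (2:ℂ)⁻¹^(n+1) • w := by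
    intro n w; rw [smul_smul, ← pow_succ']
  have hsadd : ∀ (n : ℕ) (u v : X),
      (2:ℂ)⁻¹^n • u + (2:ℂ)⁻¹^n • v = (2:ℂ)⁻¹^n • (u + v) :=
    fun n u v => (smul_add _ _ _).symm
  have hssub : ∀ (n : ℕ) (u v : X),
      (2:ℂ)⁻¹^n • u - (2:ℂ)⁻¹^n • v = (2:ℂ)⁻¹^n • (u - v) :=
    fun n u v => (smul_sub _ _ _).symm
  have htt : ∀ (n : ℕ) (w : X),
      (2:ℂ)⁻¹^n • w = ((2:ℂ)⁻¹^(n+1) • w) + ((2:ℂ)⁻¹^(n+1) • w) := by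
    intro n w
    have hc : (2:ℂ)⁻¹^(n+1) + (2:ℂ)⁻¹^(n+1) = (2:ℂ)⁻¹^n := by
      rw [pow_succ]; ring_nf
    rw [← add_smul, hc]
  have hnu : ∀ (n : ℕ) (v : Y), ‖(2:ℂ)^n • v‖ = (2:ℝ)^n * ‖v‖ := by
    intro n v
    rw [norm_smul, norm_pow]
    norm_num
  have hnx : ∀ (n : ℕ) (w : X), ‖(2:ℂ)⁻¹^n • w‖ ^ r = ((2:ℝ)⁻¹^n) ^ r * ‖w‖ ^ r := by
    intro n w
    rw [norm_smul, norm_pow, norm_inv, Real.mul_rpow (by positivity) (norm_nonneg _)]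
    norm_num
  -- D₁ / D₂ specializations
  have hD1a : ∀ x y z a : X, D₁ f x y z 0 a 0
      = f (x + y) z a + f (x - y) z a - (2:ℂ) • f x z a := by
    intro x y z a; simp [D₁, hz1, hz3]
  have hD2a : ∀ x y z a : X, D₂ f x y z 0 a 0
      = (2:ℂ) • f ((2:ℂ)⁻¹ • (x + y)) z a + (2:ℂ) • f ((2:ℂ)⁻¹ • (x - y)) z a
        - (2:ℂ) • f x z a := by
    intro x y z a; simp [D₂, hz1, hz3]
  have hD1b : ∀ x z w a : X, D₁ f x 0 z w a 0
      = f x (z - w) a + f x (z + w) a - (2:ℂ) • f x z a := by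
    intro x z w a; simp [D₁, hz2, hz3]
  have hD2b : ∀ x z w a : X, D₂ f x 0 z w a 0
      = (2:ℂ) • f ((2:ℂ)⁻¹ • x) (z - w) a + (2:ℂ) • f ((2:ℂ)⁻¹ • x) (z + w) a
        - (2:ℂ) • f x z a := by
    intro x z w a; simp [D₂, hz2, hz3]
  have hD1c : ∀ x z a b : X, D₁ f x 0 z 0 a b
      = f x z (a + b) + f x z (a - b) - (2:ℂ) • f x z a := by
    intro x z a b; simp [D₁, hz1, hz2]
  have hD2c : ∀ x z a b : X, D₂ f x 0 z 0 a b
      = (2:ℂ) • f ((2:ℂ)⁻¹ • x) z (a + b) + (2:ℂ) • f ((2:ℂ)⁻¹ • x) z (a - b)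
        - (2:ℂ) • f x z a := by
    intro x z a b; simp [D₂, hz1, hz2]
  -- Lemma A : the doubling estimate
  have hA : ∀ x z a : X, ‖f (x + x) z a - (2:ℂ) • f x z a‖
      ≤ 2 * θ * (‖x‖ ^ r * ‖z‖ ^ r * ‖a‖ ^ r) := by
    intro x z a
    have h := hineq x x z 0 a 0
    rw [hD1a, hD2a] at h
    rw [h2half, sub_self] at h
    simp only [hz2, smul_zero, add_zero, zero_add] at h
    rw [sub_self, smul_zero, norm_zero, hz0r] at h
    calc ‖f (x + x) z a - (2:ℂ) • f x z a‖
        ≤ 0 + θ * (‖x‖ ^ r + ‖x‖ ^ r) * (‖z‖ ^ r + 0) * (‖a‖ ^ r + 0) := h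
      _ = 2 * θ * (‖x‖ ^ r * ‖z‖ ^ r * ‖a‖ ^ r) := by ring
  -- Cauchy estimate for the approximation sequence
  have hdist : ∀ (x z a : X) (n : ℕ),
      dist (appr f x z a n) (appr f x z a (n+1))
        ≤ (2 * θ * (2:ℝ) ^ (-r) * (‖x‖ ^ r * ‖z‖ ^ r * ‖a‖ ^ r)) * ρ ^ n := by
    intro x z a n
    rw [dist_eq_norm]
    have e : appr f x z a n - appr f x z a (n+1)
        = (2:ℂ)^n • (f (((2:ℂ)⁻¹^(n+1) • x) + ((2:ℂ)⁻¹^(n+1) • x)) z a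
            - (2:ℂ) • f ((2:ℂ)⁻¹^(n+1) • x) z a) := by
      simp only [appr]
      rw [← htt n x]
      module
    rw [e, hnu]
    have h1 := hA ((2:ℂ)⁻¹^(n+1) • x) z a
    rw [hnx] at h1
    calc (2:ℝ)^n * ‖f (((2:ℂ)⁻¹^(n+1) • x) + ((2:ℂ)⁻¹^(n+1) • x)) z a
            - (2:ℂ) • f ((2:ℂ)⁻¹^(n+1) • x) z a‖
        ≤ (2:ℝ)^n * (2 * θ * (((2:ℝ)⁻¹^(n+1)) ^ r * ‖x‖ ^ r * (‖z‖ ^ r * ‖a‖ ^ r))) := by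
          apply mul_le_mul_of_nonneg_left _ (by positivity)
          calc ‖f (((2:ℂ)⁻¹^(n+1) • x) + ((2:ℂ)⁻¹^(n+1) • x)) z a
              - (2:ℂ) • f ((2:ℂ)⁻¹^(n+1) • x) z a‖
              ≤ 2 * θ * (((2:ℝ)⁻¹^(n+1)) ^ r * ‖x‖ ^ r * ‖z‖ ^ r * ‖a‖ ^ r) := by
                simpa [mul_assoc] using h1
            _ = 2 * θ * (((2:ℝ)⁻¹^(n+1)) ^ r * ‖x‖ ^ r * (‖z‖ ^ r * ‖a‖ ^ r)) := by ring
      _ = (2 * θ * (2:ℝ) ^ (-r) * (‖x‖ ^ r * ‖z‖ ^ r * ‖a‖ ^ r)) * ρ ^ n := by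
          rw [hρdef]
          linear_combination (2 * θ * (‖x‖ ^ r * (‖z‖ ^ r * ‖a‖ ^ r))) * rpow_helper2 r n
  have hcau : ∀ x z a : X, CauchySeq (appr f x z a) :=
    fun x z a => cauchySeq_of_le_geometric ρ _ hρ (hdist x z a)
  have htend : ∀ x z a : X, Tendsto (appr f x z a) atTop (𝓝 (Lim f x z a)) :=
    fun x z a => (hcau x z a).tendsto_limUnder
  -- the approximation bound
  have hbound : ∀ x z a : X, ‖f x z a - Lim f x z a‖
      ≤ 2 * θ / ((2:ℝ) ^ r - 2) * (‖x‖ ^ r * ‖z‖ ^ r * ‖a‖ ^ r) := by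
    intro x z a
    have h := dist_le_of_le_geometric_of_tendsto₀ ρ _ hρ (hdist x z a) (htend x z a)
    have e0 : appr f x z a 0 = f x z a := by simp [appr]
    rw [e0, dist_eq_norm] at h
    have h1ρ : 1 - ρ = (2:ℝ) ^ (-r) * ((2:ℝ) ^ r - 2) := by
      have hinv : (2:ℝ) ^ (-r) * (2:ℝ) ^ r = 1 := by
        rw [← Real.rpow_add (by norm_num)]; simp
      have hρ2 : ρ = 2 * (2:ℝ) ^ (-r) := by
        rw [hρdef, Real.rpow_sub (by norm_num), Real.rpow_one, div_eq_mul_inv,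
          ← Real.rpow_neg (by norm_num)]
      rw [hρ2]; nlinarith [hinv]
    rw [h1ρ] at h
    have h2rpos : (0:ℝ) < (2:ℝ) ^ (-r) := Real.rpow_pos_of_pos (by norm_num) _
    have e : 2 * θ * (2:ℝ) ^ (-r) * (‖x‖ ^ r * ‖z‖ ^ r * ‖a‖ ^ r)
        / ((2:ℝ) ^ (-r) * ((2:ℝ) ^ r - 2))
        = 2 * θ / ((2:ℝ) ^ r - 2) * (‖x‖ ^ r * ‖z‖ ^ r * ‖a‖ ^ r) := by
      have hne1 : (2:ℝ) ^ (-r) ≠ 0 := ne_of_gt h2rpos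
      have hne2 : (2:ℝ) ^ r - 2 ≠ 0 := by nlinarith
      field_simp
    rw [e] at h
    exact h
  -- generic limit argument
  have key : ∀ (A B : ℕ → Y) (T : Y) (c : ℝ), Tendsto A atTop (𝓝 T) →
      Tendsto B atTop (𝓝 T) → (∀ n, ‖A n‖ ≤ ‖s‖ * ‖B n‖ + c * ρ ^ n) → T = 0 := by
    intro A B T c hgA hgB hle
    have h1 : Tendsto (fun n => ‖A n‖) atTop (𝓝 ‖T‖) := hgA.norm
    have h2 : Tendsto (fun n => ‖s‖ * ‖B n‖ + c * ρ ^ n) atTop (𝓝 (‖s‖ * ‖T‖ + c * 0)) :=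
      (hgB.norm.const_mul _).add
        ((tendsto_pow_atTop_nhds_zero_of_lt_one hρ0.le hρ).const_mul c)
    have := le_of_tendsto_of_tendsto' h1 h2 hle
    exact norm_eq_zero_of_le_smul hs1 (by simpa using this)
  have htends : ∀ x z a : X,
      Tendsto (fun n => appr f x z a (n + 1)) atTop (𝓝 (Lim f x z a)) :=
    fun x z a => (htend x z a).comp (tendsto_add_atTop_nat 1)
  -- vanishing of the limit at zero
  have hL0a : ∀ z a : X, Lim f 0 z a = 0 := by
    intro z a
    have e : appr f 0 z a = fun _ => (0:Y) := funext fun n => by simp [appr, hz2]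
    exact tendsto_nhds_unique (htend 0 z a) (e ▸ tendsto_const_nhds)
  have hL0b : ∀ x a : X, Lim f x 0 a = 0 := by
    intro x a
    have e : appr f x 0 a = fun _ => (0:Y) := funext fun n => by simp [appr, hz1]
    exact tendsto_nhds_unique (htend x 0 a) (e ▸ tendsto_const_nhds)
  have hL0c : ∀ x z : X, Lim f x z 0 = 0 := by
    intro x z
    have e : appr f x z 0 = fun _ => (0:Y) := funext fun n => by simp [appr, hz3]
    exact tendsto_nhds_unique (htend x z 0) (e ▸ tendsto_const_nhds)
  -- Jensen identity in the first variable
  have J1 : ∀ x y z a : X,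
      Lim f (x + y) z a + Lim f (x - y) z a - (2:ℂ) • Lim f x z a = 0 := by
    intro x y z a
    apply key (fun n => (2:ℂ)^n • D₁ f ((2:ℂ)⁻¹^n • x) ((2:ℂ)⁻¹^n • y) z 0 a 0)
      (fun n => (2:ℂ)^n • D₂ f ((2:ℂ)⁻¹^n • x) ((2:ℂ)⁻¹^n • y) z 0 a 0)
      _ (θ * (‖x‖ ^ r + ‖y‖ ^ r) * ‖z‖ ^ r * ‖a‖ ^ r)
    · have e : ∀ n, (2:ℂ)^n • D₁ f ((2:ℂ)⁻¹^n • x) ((2:ℂ)⁻¹^n • y) z 0 a 0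
          = appr f (x + y) z a n + appr f (x - y) z a n - (2:ℂ) • appr f x z a n := by
        intro n
        rw [hD1a, hsadd, hssub]
        simp only [appr]
        module
      exact Tendsto.congr (fun n => (e n).symm)
        (((htend (x+y) z a).add (htend (x-y) z a)).sub ((htend x z a).const_smul (2:ℂ)))
    · have e : ∀ n, (2:ℂ)^n • D₂ f ((2:ℂ)⁻¹^n • x) ((2:ℂ)⁻¹^n • y) z 0 a 0
          = appr f (x + y) z a (n+1) + appr f (x - y) z a (n+1) - (2:ℂ) • appr f x z a n := by
        intro n
        rw [hD2a, hsadd, hssub, hhalfpow n (x+y), hhalfpow n (x-y)]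
        simp only [appr]
        module
      exact Tendsto.congr (fun n => (e n).symm)
        (((htends (x+y) z a).add (htends (x-y) z a)).sub ((htend x z a).const_smul (2:ℂ)))
    · intro n
      have h := hineq ((2:ℂ)⁻¹^n • x) ((2:ℂ)⁻¹^n • y) z 0 a 0
      rw [hnu, hnu]
      have hmul := mul_le_mul_of_nonneg_left h (by positivity : (0:ℝ) ≤ (2:ℝ)^n)
      calc (2:ℝ)^n * ‖D₁ f ((2:ℂ)⁻¹^n • x) ((2:ℂ)⁻¹^n • y) z 0 a 0‖
          ≤ (2:ℝ)^n * (‖s‖ * ‖D₂ f ((2:ℂ)⁻¹^n • x) ((2:ℂ)⁻¹^n • y) z 0 a 0‖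
              + θ * (‖(2:ℂ)⁻¹^n • x‖ ^ r + ‖(2:ℂ)⁻¹^n • y‖ ^ r) * (‖z‖ ^ r + ‖(0:X)‖ ^ r)
                * (‖a‖ ^ r + ‖(0:X)‖ ^ r)) := by
            rw [← norm_smul s]; exact hmul
        _ = ‖s‖ * ((2:ℝ)^n * ‖D₂ f ((2:ℂ)⁻¹^n • x) ((2:ℂ)⁻¹^n • y) z 0 a 0‖)
              + θ * (‖x‖ ^ r + ‖y‖ ^ r) * ‖z‖ ^ r * ‖a‖ ^ r * ρ ^ n := by
            rw [hz0r, hnx, hnx, hρdef]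
            linear_combination (θ * (‖x‖ ^ r + ‖y‖ ^ r) * ‖z‖ ^ r * ‖a‖ ^ r) * rpow_helper1 r n
  -- Jensen identity in the second variable
  have J2 : ∀ x z w a : X,
      Lim f x (z - w) a + Lim f x (z + w) a - (2:ℂ) • Lim f x z a = 0 := by
    intro x z w a
    apply key (fun n => (2:ℂ)^n • D₁ f ((2:ℂ)⁻¹^n • x) 0 z w a 0)
      (fun n => (2:ℂ)^n • D₂ f ((2:ℂ)⁻¹^n • x) 0 z w a 0)
      _ (θ * ‖x‖ ^ r * (‖z‖ ^ r + ‖w‖ ^ r) * ‖a‖ ^ r)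
    · have e : ∀ n, (2:ℂ)^n • D₁ f ((2:ℂ)⁻¹^n • x) 0 z w a 0
          = appr f x (z - w) a n + appr f x (z + w) a n - (2:ℂ) • appr f x z a n := by
        intro n
        rw [hD1b]
        simp only [appr]
        module
      exact Tendsto.congr (fun n => (e n).symm)
        (((htend x (z-w) a).add (htend x (z+w) a)).sub ((htend x z a).const_smul (2:ℂ)))
    · have e : ∀ n, (2:ℂ)^n • D₂ f ((2:ℂ)⁻¹^n • x) 0 z w a 0
          = appr f x (z - w) a (n+1) + appr f x (z + w) a (n+1) - (2:ℂ) • appr f x z a n := by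
        intro n
        rw [hD2b, hhalfpow n x]
        simp only [appr]
        module
      exact Tendsto.congr (fun n => (e n).symm)
        (((htends x (z-w) a).add (htends x (z+w) a)).sub ((htend x z a).const_smul (2:ℂ)))
    · intro n
      have h := hineq ((2:ℂ)⁻¹^n • x) 0 z w a 0
      rw [hnu, hnu]
      have hmul := mul_le_mul_of_nonneg_left h (by positivity : (0:ℝ) ≤ (2:ℝ)^n)
      calc (2:ℝ)^n * ‖D₁ f ((2:ℂ)⁻¹^n • x) 0 z w a 0‖
          ≤ (2:ℝ)^n * (‖s‖ * ‖D₂ f ((2:ℂ)⁻¹^n • x) 0 z w a 0‖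
              + θ * (‖(2:ℂ)⁻¹^n • x‖ ^ r + ‖(0:X)‖ ^ r) * (‖z‖ ^ r + ‖w‖ ^ r)
                * (‖a‖ ^ r + ‖(0:X)‖ ^ r)) := by
            rw [← norm_smul s]; exact hmul
        _ = ‖s‖ * ((2:ℝ)^n * ‖D₂ f ((2:ℂ)⁻¹^n • x) 0 z w a 0‖)
              + θ * ‖x‖ ^ r * (‖z‖ ^ r + ‖w‖ ^ r) * ‖a‖ ^ r * ρ ^ n := by
            rw [hz0r, hnx, hρdef]
            linear_combination (θ * ‖x‖ ^ r * (‖z‖ ^ r + ‖w‖ ^ r) * ‖a‖ ^ r) * rpow_helper1 r n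
  -- Jensen identity in the third variable
  have J3 : ∀ x z a b : X,
      Lim f x z (a + b) + Lim f x z (a - b) - (2:ℂ) • Lim f x z a = 0 := by
    intro x z a b
    apply key (fun n => (2:ℂ)^n • D₁ f ((2:ℂ)⁻¹^n • x) 0 z 0 a b)
      (fun n => (2:ℂ)^n • D₂ f ((2:ℂ)⁻¹^n • x) 0 z 0 a b)
      _ (θ * ‖x‖ ^ r * ‖z‖ ^ r * (‖a‖ ^ r + ‖b‖ ^ r))
    · have e : ∀ n, (2:ℂ)^n • D₁ f ((2:ℂ)⁻¹^n • x) 0 z 0 a b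
          = appr f x z (a + b) n + appr f x z (a - b) n - (2:ℂ) • appr f x z a n := by
        intro n
        rw [hD1c]
        simp only [appr]
        module
      exact Tendsto.congr (fun n => (e n).symm)
        (((htend x z (a+b)).add (htend x z (a-b))).sub ((htend x z a).const_smul (2:ℂ)))
    · have e : ∀ n, (2:ℂ)^n • D₂ f ((2:ℂ)⁻¹^n • x) 0 z 0 a b
          = appr f x z (a + b) (n+1) + appr f x z (a - b) (n+1) - (2:ℂ) • appr f x z a n := by
        intro n
        rw [hD2c, hhalfpow n x]
        simp only [appr]
        module
      exact Tendsto.congr (fun n => (e n).symm)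
        (((htends x z (a+b)).add (htends x z (a-b))).sub ((htend x z a).const_smul (2:ℂ)))
    · intro n
      have h := hineq ((2:ℂ)⁻¹^n • x) 0 z 0 a b
      rw [hnu, hnu]
      have hmul := mul_le_mul_of_nonneg_left h (by positivity : (0:ℝ) ≤ (2:ℝ)^n)
      calc (2:ℝ)^n * ‖D₁ f ((2:ℂ)⁻¹^n • x) 0 z 0 a b‖
          ≤ (2:ℝ)^n * (‖s‖ * ‖D₂ f ((2:ℂ)⁻¹^n • x) 0 z 0 a b‖
              + θ * (‖(2:ℂ)⁻¹^n • x‖ ^ r + ‖(0:X)‖ ^ r) * (‖z‖ ^ r + ‖(0:X)‖ ^ r)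
                * (‖a‖ ^ r + ‖b‖ ^ r)) := by
            rw [← norm_smul s]; exact hmul
        _ = ‖s‖ * ((2:ℝ)^n * ‖D₂ f ((2:ℂ)⁻¹^n • x) 0 z 0 a b‖)
              + θ * ‖x‖ ^ r * ‖z‖ ^ r * (‖a‖ ^ r + ‖b‖ ^ r) * ρ ^ n := by
            rw [hz0r, hnx, hρdef]
            linear_combination (θ * ‖x‖ ^ r * ‖z‖ ^ r * (‖a‖ ^ r + ‖b‖ ^ r)) * rpow_helper1 r n
  -- additivity in each variable
  have add1 : ∀ u v z a : X, Lim f (u + v) z a = Lim f u z a + Lim f v z a := by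
    intro u v z a
    exact additive_of_jensen (M := fun t => Lim f t z a) (hL0a z a)
      (fun u v => by have := J1 u v z a; rwa [sub_eq_zero] at this) u v
  have add2 : ∀ x u v a : X, Lim f x (u + v) a = Lim f x u a + Lim f x v a := by
    intro x u v a
    refine additive_of_jensen (M := fun t => Lim f x t a) (hL0b x a) (fun u v => ?_) u v
    have := J2 x u v a
    rw [sub_eq_zero] at this
    rw [add_comm]
    exact this
  have add3 : ∀ x z u v : X, Lim f x z (u + v) = Lim f x z u + Lim f x z v := by
    intro x z u v
    exact additive_of_jensen (M := fun t => Lim f x z t) (hL0c x z)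
      (fun u v => by have := J3 x z u v; rwa [sub_eq_zero] at this) u v
  -- scaling lemma for tri-additive maps
  have hscale : ∀ (M : X → X → X → Y), (∀ u v z a : X, M (u + v) z a = M u z a + M v z a) →
      ∀ (x z a : X) (n : ℕ), M x z a = (2:ℂ)^n • M ((2:ℂ)⁻¹^n • x) z a := by
    intro M hM x z a n
    induction n with
    | zero => simp
    | succ n ih =>
      rw [ih, htt n x, hM]
      module
  refine ⟨Lim f, ⟨⟨fun x x' z a => add1 x x' z a, fun x z z' a => add2 x z z' a,
    fun x z a a' => add3 x z a a'⟩, hbound⟩, ?_⟩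
  -- uniqueness
  intro L' hL'
  obtain ⟨hL'add, hL'bd⟩ := hL'
  funext x z a
  have hn : ∀ n : ℕ, ‖L' x z a - Lim f x z a‖
      ≤ (2 * (2 * θ / ((2:ℝ) ^ r - 2)) * (‖x‖ ^ r * ‖z‖ ^ r * ‖a‖ ^ r)) * ρ ^ n := by
    intro n
    rw [hscale L' hL'add.1 x z a n, hscale (Lim f) add1 x z a n, ← smul_sub, hnu]
    set t := (2:ℂ)⁻¹^n • x with ht
    have h1 := hL'bd t z a
    have h2 := hbound t z a
    have htri : ‖L' t z a - Lim f t z a‖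
        ≤ ‖f t z a - L' t z a‖ + ‖f t z a - Lim f t z a‖ := by
      calc ‖L' t z a - Lim f t z a‖
          = ‖(f t z a - Lim f t z a) - (f t z a - L' t z a)‖ := by abel_nf
        _ ≤ ‖f t z a - Lim f t z a‖ + ‖f t z a - L' t z a‖ := norm_sub_le _ _
        _ = ‖f t z a - L' t z a‖ + ‖f t z a - Lim f t z a‖ := by ring
    have hKt : ‖t‖ ^ r = ((2:ℝ)⁻¹^n) ^ r * ‖x‖ ^ r := hnx n x
    have hfinal : ‖L' t z a - Lim f t z a‖
        ≤ 2 * (2 * θ / ((2:ℝ) ^ r - 2)) * (((2:ℝ)⁻¹^n) ^ r * (‖x‖ ^ r * ‖z‖ ^ r * ‖a‖ ^ r)) := by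
      have := htri.trans (add_le_add h1 h2)
      rw [hKt] at this
      calc ‖L' t z a - Lim f t z a‖
          ≤ 2 * θ / ((2:ℝ) ^ r - 2) * (((2:ℝ)⁻¹^n) ^ r * ‖x‖ ^ r * ‖z‖ ^ r * ‖a‖ ^ r)
            + 2 * θ / ((2:ℝ) ^ r - 2) * (((2:ℝ)⁻¹^n) ^ r * ‖x‖ ^ r * ‖z‖ ^ r * ‖a‖ ^ r) := by
            exact this
        _ = 2 * (2 * θ / ((2:ℝ) ^ r - 2)) * (((2:ℝ)⁻¹^n) ^ r * (‖x‖ ^ r * ‖z‖ ^ r * ‖a‖ ^ r)) := by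
            ring
    calc (2:ℝ)^n * ‖L' t z a - Lim f t z a‖
        ≤ (2:ℝ)^n * (2 * (2 * θ / ((2:ℝ) ^ r - 2))
            * (((2:ℝ)⁻¹^n) ^ r * (‖x‖ ^ r * ‖z‖ ^ r * ‖a‖ ^ r))) :=
          mul_le_mul_of_nonneg_left hfinal (by positivity)
      _ = (2 * (2 * θ / ((2:ℝ) ^ r - 2)) * (‖x‖ ^ r * ‖z‖ ^ r * ‖a‖ ^ r)) * ρ ^ n := by
          rw [hρdef]
          linear_combination (2 * (2 * θ / ((2:ℝ) ^ r - 2))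
            * (‖x‖ ^ r * ‖z‖ ^ r * ‖a‖ ^ r)) * rpow_helper1 r n
  have h0 : Tendsto (fun n : ℕ => (2 * (2 * θ / ((2:ℝ) ^ r - 2))
      * (‖x‖ ^ r * ‖z‖ ^ r * ‖a‖ ^ r)) * ρ ^ n) atTop (𝓝 0) := by
    simpa using ((tendsto_pow_atTop_nhds_zero_of_lt_one hρ0.le hρ).const_mul
      (2 * (2 * θ / ((2:ℝ) ^ r - 2)) * (‖x‖ ^ r * ‖z‖ ^ r * ‖a‖ ^ r)))
  have hle0 : ‖L' x z a - Lim f x z a‖ ≤ 0 :=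
    le_of_tendsto_of_tendsto' tendsto_const_nhds h0 hn
  exact sub_eq_zero.mp (norm_le_zero_iff.mp hle0)
end

section
/- Let X be a complex normed space and Y a complex Banach space, and let s be a fixed nonzero complex number with |s| < 1. If a mapping f : X³ → Y satisfies f(0, z, a) = f(x, 0, a) = f(x, z, 0) = 0 for all x, z, a ∈ X and the inequality ‖D₂f(x, y, z, w, a, b)‖ ≤ ‖s · D₁f(x, y, z, w, a, b)‖ for all x, y, z, w, a, b ∈ X, then f is tri-additive. -/
variable {X Y : Type*} [NormedAddCommGroup X] [NormedSpace ℂ X]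
  [NormedAddCommGroup Y] [NormedSpace ℂ Y] [CompleteSpace Y]


lemma jensen_add' {X Y : Type*} [AddCommGroup X] [Module ℂ X] [AddCommGroup Y] [Module ℂ Y]
    (g : X → Y) (h0 : g 0 = 0)
    (hJ : ∀ u v, g (u + v) + g (u - v) = (2 : ℂ) • g u) :
    ∀ p q, g (p + q) = g p + g q := by
  have hd : ∀ u : X, g (u + u) = (2 : ℂ) • g u := by
    intro u
    have := hJ u u
    simpa [h0] using this
  intro p q
  have h1 := hJ ((2 : ℂ)⁻¹ • (p + q)) ((2 : ℂ)⁻¹ • (p - q))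
  have e1 : (2 : ℂ)⁻¹ • (p + q) + (2 : ℂ)⁻¹ • (p - q) = p := by module
  have e2 : (2 : ℂ)⁻¹ • (p + q) - (2 : ℂ)⁻¹ • (p - q) = q := by module
  have e3 : (2 : ℂ)⁻¹ • (p + q) + (2 : ℂ)⁻¹ • (p + q) = p + q := by module
  have hd' := hd ((2 : ℂ)⁻¹ • (p + q))
  rw [e1, e2] at h1
  rw [e3] at hd'
  rw [hd', h1]

theorem stmt_3 (s : ℂ) (hs0 : s ≠ 0) (hs1 : ‖s‖ < 1) (f : X → X → X → Y)
    (hzero : ∀ x z a : X, f 0 z a = 0 ∧ f x 0 a = 0 ∧ f x z 0 = 0)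
    (hineq : ∀ x y z w a b : X, ‖D₂ f x y z w a b‖ ≤ ‖s • D₁ f x y z w a b‖) :
    TriAdditive f := by
  have h01 : ∀ z a : X, f 0 z a = 0 := fun z a => (hzero 0 z a).1
  have h02 : ∀ x a : X, f x 0 a = 0 := fun x a => (hzero x 0 a).2.1
  have h03 : ∀ x z : X, f x z 0 = 0 := fun x z => (hzero x z 0).2.2
  have hhalf : ∀ x z a : X, f x z a = (2 : ℂ) • f ((2 : ℂ)⁻¹ • x) z a := by
    intro x z a
    have hd1 : D₁ f x 0 z 0 a 0 = 0 := by
      simp [D₁, h01, h02, h03, two_smul]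
    have h := hineq x 0 z 0 a 0
    rw [hd1, smul_zero, norm_zero] at h
    have hd2 : D₂ f x 0 z 0 a 0 = 0 := by
      rwa [norm_le_zero_iff] at h
    have := hd2
    simp only [D₂, add_zero, sub_zero, h01, h02, h03, smul_zero] at this
    have h4 : (2 : ℂ) • ((2 : ℂ) • f ((2 : ℂ)⁻¹ • x) z a - f x z a) = 0 := by
      rw [smul_sub, smul_smul]
      linear_combination (norm := module) this
    have h5 := (smul_eq_zero.mp h4).resolve_left (by norm_num)
    exact (sub_eq_zero.mp h5).symm
  have hD1 : ∀ x y z w a b : X, D₁ f x y z w a b = 0 := by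
    intro x y z w a b
    have heq : D₂ f x y z w a b = D₁ f x y z w a b := by
      rw [D₂, D₁, ← hhalf, ← hhalf]
    have h := hineq x y z w a b
    rw [heq, norm_smul] at h
    by_contra hne
    have hpos : 0 < ‖D₁ f x y z w a b‖ := norm_pos_iff.mpr hne
    nlinarith
  refine ⟨?_, ?_, ?_⟩
  · intro x y z a
    refine jensen_add' (fun u => f u z a) (h01 z a) (fun u v => ?_) x y
    have h := hD1 u v z 0 a 0
    simp only [D₁, add_zero, sub_zero, h01, h02, h03, smul_zero] at h
    linear_combination (norm := module) h
  · intro x z w a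
    refine jensen_add' (fun u => f x u a) (h02 x a) (fun u v => ?_) z w
    have h := hD1 x 0 u v a 0
    simp only [D₁, add_zero, sub_zero, h01, h02, h03, smul_zero] at h
    linear_combination (norm := module) h
  · intro x z a b
    refine jensen_add' (fun u => f x z u) (h03 x z) (fun u v => ?_) a b
    have h := hD1 x 0 z 0 u v
    simp only [D₁, add_zero, sub_zero, h01, h02, h03, smul_zero] at h
    linear_combination (norm := module) h
end

section
/- Let X be a complex normed space, Y a complex Banach space, s a fixed nonzero complex number with |s| < 1, r > 1 a real number, and θ ≥ 0. Suppose f : X³ → Y satisfies f(x, 0, a) = f(0, z, a) = f(x, z, 0) = 0 for all x, z, a ∈ X and ‖D₂f(x, y, z, w, a, b)‖ ≤ ‖s · D₁f(x, y, z, w, a, b)‖ + θ(‖x‖^r + ‖y‖^r)(‖z‖^r + ‖w‖^r)(‖a‖^r + ‖b‖^r) for all x, y, z, w, a, b ∈ X. Then there exists a unique tri-additive mapping L : X³ → Y such that ‖f(x, z, a) − L(x, z, a)‖ ≤ (2^r θ/(2(2^r − 2))) ‖x‖^r ‖z‖^r ‖a‖^r for all x, z, a ∈ X. -/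
variable {X Y : Type*} [NormedAddCommGroup X] [NormedSpace ℂ X]
  [NormedAddCommGroup Y] [NormedSpace ℂ Y] [CompleteSpace Y]

open Filter Topology in
theorem stmt_4 (s : ℂ) (hs0 : s ≠ 0) (hs1 : ‖s‖ < 1) (r θ : ℝ) (hr : 1 < r) (hθ : 0 ≤ θ)
    (f : X → X → X → Y)
    (hzero : ∀ x z a : X, f x 0 a = 0 ∧ f 0 z a = 0 ∧ f x z 0 = 0)
    (hineq : ∀ x y z w a b : X,
      ‖D₂ f x y z w a b‖ ≤ ‖s • D₁ f x y z w a b‖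
        + θ * (‖x‖ ^ r + ‖y‖ ^ r) * (‖z‖ ^ r + ‖w‖ ^ r) * (‖a‖ ^ r + ‖b‖ ^ r)) :
    ∃! L : X → X → X → Y, TriAdditive L ∧
      ∀ x z a : X, ‖f x z a - L x z a‖ ≤ (2 : ℝ) ^ r * θ / (2 * ((2 : ℝ) ^ r - 2)) * (‖x‖ ^ r * ‖z‖ ^ r * ‖a‖ ^ r) := by
  have hr0 : (0:ℝ) < r := lt_trans one_pos hr
  have hrne : r ≠ 0 := ne_of_gt hr0
  have hz1 : ∀ x a : X, f x 0 a = 0 := fun x a => (hzero x 0 a).1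
  have hz2 : ∀ z a : X, f 0 z a = 0 := fun z a => (hzero 0 z a).2.1
  have hz3 : ∀ x z : X, f x z 0 = 0 := fun x z => (hzero x z 0).2.2
  have hnorm0 : ‖(0:X)‖ ^ r = 0 := by rw [norm_zero, Real.zero_rpow hrne]
  have hn2 : ‖(2:ℂ)‖ = 2 := by simp
  -- the basic contraction estimate
  have hkey : ∀ x z a : X, ‖f x z a - (2:ℂ) • f ((2:ℂ)⁻¹ • x) z a‖
      ≤ θ / 2 * (‖x‖^r * ‖z‖^r * ‖a‖^r) := by
    intro x z a
    have h := hineq x 0 z 0 a 0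
    have e1 : D₂ f x 0 z 0 a 0 = (2:ℂ) • ((2:ℂ) • f ((2:ℂ)⁻¹ • x) z a - f x z a) := by
      simp only [D₂, add_zero, sub_zero, hz1, hz2, hz3, smul_zero]
      module
    have e2 : D₁ f x 0 z 0 a 0 = 0 := by
      simp only [D₁, add_zero, sub_zero, hz1, hz2, hz3, smul_zero]
      module
    rw [e1, e2, smul_zero, norm_zero, zero_add, norm_smul, hn2] at h
    simp only [hnorm0, add_zero] at h
    rw [norm_sub_rev]
    nlinarith [norm_nonneg ((2:ℂ) • f ((2:ℂ)⁻¹ • x) z a - f x z a)]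
  -- geometric data
  have h2r : (2:ℝ) < (2:ℝ) ^ r := by
    calc (2:ℝ) = (2:ℝ) ^ (1:ℝ) := (Real.rpow_one 2).symm
    _ < (2:ℝ)^r := Real.rpow_lt_rpow_of_exponent_lt one_lt_two hr
  have h2rpos : (0:ℝ) < (2:ℝ)^r := Real.rpow_pos_of_pos two_pos r
  set κ : ℝ := ((2:ℝ)^r)⁻¹ with hκ
  set q : ℝ := 2 * κ with hqdef
  have hq0 : 0 ≤ q := by positivity
  have hq1 : q < 1 := by
    rw [hqdef, hκ, mul_inv_lt_iff₀ h2rpos, one_mul]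
    exact h2r
  have hcn : ∀ (n:ℕ) (x:X), ‖((2:ℂ)⁻¹)^n • x‖^r = κ^n * ‖x‖^r := by
    intro n x
    rw [norm_smul, norm_pow, norm_inv, hn2]
    rw [Real.mul_rpow (by positivity) (norm_nonneg x)]
    congr 1
    rw [inv_pow, Real.inv_rpow (by positivity), hκ, inv_pow]
    congr 1
    rw [← Real.rpow_natCast (2:ℝ) n, ← Real.rpow_mul (by norm_num), mul_comm,
      Real.rpow_mul (by norm_num), Real.rpow_natCast]
  have nsm : ∀ (n:ℕ) (v:Y), ‖(2:ℂ)^n • v‖ = 2^n * ‖v‖ := by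
    intro n v; rw [norm_smul, norm_pow, hn2]
  -- the approximating sequence is Cauchy
  have hstep : ∀ (x z a : X) (n:ℕ),
      dist ((2:ℂ)^n • f (((2:ℂ)⁻¹)^n • x) z a) ((2:ℂ)^(n+1) • f (((2:ℂ)⁻¹)^(n+1) • x) z a)
        ≤ (θ/2 * (‖x‖^r * ‖z‖^r * ‖a‖^r)) * q ^ n := by
    intro x z a n
    rw [dist_eq_norm]
    have e : (((2:ℂ)⁻¹)^(n+1) : ℂ) • x = (2:ℂ)⁻¹ • (((2:ℂ)⁻¹)^n • x) := by
      rw [smul_smul, ← pow_succ']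
    have e2 : (2:ℂ)^n • f (((2:ℂ)⁻¹)^n • x) z a - (2:ℂ)^(n+1) • f (((2:ℂ)⁻¹)^(n+1) • x) z a
        = (2:ℂ)^n • (f (((2:ℂ)⁻¹)^n • x) z a - (2:ℂ) • f ((2:ℂ)⁻¹ • (((2:ℂ)⁻¹)^n • x)) z a) := by
      rw [e]; module
    rw [e2, nsm]
    calc (2:ℝ)^n * ‖f (((2:ℂ)⁻¹)^n • x) z a - (2:ℂ) • f ((2:ℂ)⁻¹ • (((2:ℂ)⁻¹)^n • x)) z a‖
        ≤ (2:ℝ)^n * (θ/2 * (‖((2:ℂ)⁻¹)^n • x‖^r * ‖z‖^r * ‖a‖^r)) := by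
          gcongr
          exact hkey _ z a
      _ = (θ/2 * (‖x‖^r * ‖z‖^r * ‖a‖^r)) * q ^ n := by
          rw [hcn, hqdef, mul_pow]; ring
  have hcauchy : ∀ x z a : X, CauchySeq (fun n : ℕ => (2:ℂ)^n • f (((2:ℂ)⁻¹)^n • x) z a) :=
    fun x z a => cauchySeq_of_le_geometric q _ hq1 (hstep x z a)
  have hconv : ∀ x z a : X, ∃ l : Y,
      Tendsto (fun n : ℕ => (2:ℂ)^n • f (((2:ℂ)⁻¹)^n • x) z a) atTop (𝓝 l) :=
    fun x z a => cauchySeq_tendsto_of_complete (hcauchy x z a)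
  choose L hL using hconv
  -- the approximation bound
  have hbound : ∀ x z a : X, ‖f x z a - L x z a‖
      ≤ (2 : ℝ) ^ r * θ / (2 * ((2 : ℝ) ^ r - 2)) * (‖x‖ ^ r * ‖z‖ ^ r * ‖a‖ ^ r) := by
    intro x z a
    have h := dist_le_of_le_geometric_of_tendsto₀ q _ hq1 (hstep x z a) (hL x z a)
    simp only [pow_zero, one_smul] at h
    rw [dist_eq_norm] at h
    refine h.trans (le_of_eq ?_)
    have h1q : 1 - q = ((2:ℝ)^r - 2) / (2:ℝ)^r := by
      rw [hqdef, hκ]; field_simp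
    rw [h1q]
    have hne : (2:ℝ)^r - 2 ≠ 0 := by nlinarith
    field_simp
  -- the functional equation for L
  have hLshift : ∀ x z a : X,
      Tendsto (fun n : ℕ => (2:ℂ)^(n+1) • f (((2:ℂ)⁻¹)^(n+1) • x) z a) atTop (𝓝 (L x z a)) :=
    fun x z a => (hL x z a).comp (tendsto_add_atTop_nat 1)
  have hD1L : ∀ x y z w a b : X, D₁ L x y z w a b = 0 := by
    intro x y z w a b
    have hB : Tendsto (fun n : ℕ => (2:ℂ)^n • D₁ f (((2:ℂ)⁻¹)^n • x) (((2:ℂ)⁻¹)^n • y) z w a b)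
        atTop (𝓝 (D₁ L x y z w a b)) := by
      simp only [D₁]
      refine Tendsto.congr (fun n => ?_)
        (((((((hL (x+y) (z-w) (a+b)).add (hL (x-y) (z+w) (a-b))).sub
          ((hL x z a).const_smul (2:ℂ))).add ((hL x w b).const_smul (2:ℂ))).sub
          ((hL y z b).const_smul (2:ℂ))).add ((hL y w a).const_smul (2:ℂ))))
      simp only [D₁, smul_add, smul_sub]
      module
    have hA : Tendsto (fun n : ℕ => (2:ℂ)^n • D₂ f (((2:ℂ)⁻¹)^n • x) (((2:ℂ)⁻¹)^n • y) z w a b)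
        atTop (𝓝 (D₁ L x y z w a b)) := by
      simp only [D₁]
      refine Tendsto.congr (fun n => ?_)
        (((((((hLshift (x+y) (z-w) (a+b)).add (hLshift (x-y) (z+w) (a-b))).sub
          ((hL x z a).const_smul (2:ℂ))).add ((hL x w b).const_smul (2:ℂ))).sub
          ((hL y z b).const_smul (2:ℂ))).add ((hL y w a).const_smul (2:ℂ))))
      simp only [D₂, smul_add, smul_sub, smul_smul, pow_succ']
      module
    set K : ℝ := θ * (‖x‖^r + ‖y‖^r) * (‖z‖^r + ‖w‖^r) * (‖a‖^r + ‖b‖^r) with hK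
    have hptwise : ∀ n : ℕ,
        ‖(2:ℂ)^n • D₂ f (((2:ℂ)⁻¹)^n • x) (((2:ℂ)⁻¹)^n • y) z w a b‖
          ≤ ‖s‖ * ‖(2:ℂ)^n • D₁ f (((2:ℂ)⁻¹)^n • x) (((2:ℂ)⁻¹)^n • y) z w a b‖ + K * q^n := by
      intro n
      have h := hineq (((2:ℂ)⁻¹)^n • x) (((2:ℂ)⁻¹)^n • y) z w a b
      rw [hcn, hcn, norm_smul s] at h
      rw [nsm, nsm]
      calc (2:ℝ)^n * ‖D₂ f (((2:ℂ)⁻¹)^n • x) (((2:ℂ)⁻¹)^n • y) z w a b‖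
          ≤ (2:ℝ)^n * (‖s‖ * ‖D₁ f (((2:ℂ)⁻¹)^n • x) (((2:ℂ)⁻¹)^n • y) z w a b‖
            + θ * (κ^n * ‖x‖^r + κ^n * ‖y‖^r) * (‖z‖^r + ‖w‖^r) * (‖a‖^r + ‖b‖^r)) :=
            mul_le_mul_of_nonneg_left h (by positivity)
        _ = ‖s‖ * ((2:ℝ)^n * ‖D₁ f (((2:ℂ)⁻¹)^n • x) (((2:ℂ)⁻¹)^n • y) z w a b‖) + K * q^n := by
            rw [hK, hqdef, mul_pow]; ring
    have hlim2 : Tendsto (fun n : ℕ =>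
        ‖s‖ * ‖(2:ℂ)^n • D₁ f (((2:ℂ)⁻¹)^n • x) (((2:ℂ)⁻¹)^n • y) z w a b‖ + K * q^n)
        atTop (𝓝 (‖s‖ * ‖D₁ L x y z w a b‖)) := by
      have := (hB.norm.const_mul ‖s‖).add
        ((tendsto_pow_atTop_nhds_zero_of_lt_one hq0 hq1).const_mul K)
      simpa using this
    have hfin : ‖D₁ L x y z w a b‖ ≤ ‖s‖ * ‖D₁ L x y z w a b‖ :=
      le_of_tendsto_of_tendsto' hA.norm hlim2 hptwise
    have h0 : ‖D₁ L x y z w a b‖ = 0 := by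
      nlinarith [norm_nonneg (D₁ L x y z w a b)]
    exact norm_eq_zero.mp h0
  -- vanishing of L when one argument is zero
  have hLzmid : ∀ x a : X, L x 0 a = 0 := by
    intro x a
    have he : (fun n : ℕ => (2:ℂ)^n • f (((2:ℂ)⁻¹)^n • x) 0 a) = fun _ => (0:Y) := by
      funext n; rw [hz1, smul_zero]
    have h := hL x 0 a
    rw [he] at h
    exact tendsto_nhds_unique h tendsto_const_nhds
  have hLzleft : ∀ z a : X, L 0 z a = 0 := by
    intro z a
    have he : (fun n : ℕ => (2:ℂ)^n • f (((2:ℂ)⁻¹)^n • (0:X)) z a) = fun _ => (0:Y) := by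
      funext n; rw [smul_zero, hz2, smul_zero]
    have h := hL 0 z a
    rw [he] at h
    exact tendsto_nhds_unique h tendsto_const_nhds
  have hLzright : ∀ x z : X, L x z 0 = 0 := by
    intro x z
    have he : (fun n : ℕ => (2:ℂ)^n • f (((2:ℂ)⁻¹)^n • x) z 0) = fun _ => (0:Y) := by
      funext n; rw [hz3, smul_zero]
    have h := hL x z 0
    rw [he] at h
    exact tendsto_nhds_unique h tendsto_const_nhds
  -- triadditivity
  have hE : ∀ x y z w a b : X,
      L (x+y) (z-w) (a+b) + L (x-y) (z+w) (a-b)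
        - (2:ℂ) • L x z a + (2:ℂ) • L x w b - (2:ℂ) • L y z b + (2:ℂ) • L y w a = 0 := by
    intro x y z w a b
    have h := hD1L x y z w a b
    simpa only [D₁] using h
  have htwo : ∀ v : Y, (2:ℂ) • v = 0 → v = 0 := by
    intro v hv
    rcases smul_eq_zero.mp hv with h | h
    · norm_num at h
    · exact h
  have hJ : ∀ p p' z a : X, L (p+p') z a + L (p-p') z a = (2:ℂ) • L p z a := by
    intro p p' z a
    have h := hE p p' z 0 a 0
    simp only [sub_zero, add_zero, hLzmid, hLzright, smul_zero] at h
    rw [← sub_eq_zero, ← h]; try module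
  have hadd1 : ∀ u v z a : X, L (u+v) z a = L u z a + L v z a := by
    intro u v z a
    have e1 : ((2:ℂ)⁻¹ • (u+v)) + ((2:ℂ)⁻¹ • (u-v)) = u := by module
    have e2 : ((2:ℂ)⁻¹ • (u+v)) - ((2:ℂ)⁻¹ • (u-v)) = v := by module
    have e3 : ((2:ℂ)⁻¹ • (u+v)) + ((2:ℂ)⁻¹ • (u+v)) = u + v := by module
    have e4 : ((2:ℂ)⁻¹ • (u+v)) - ((2:ℂ)⁻¹ • (u+v)) = 0 := by module
    have h1 := hJ ((2:ℂ)⁻¹ • (u+v)) ((2:ℂ)⁻¹ • (u-v)) z a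
    rw [e1, e2] at h1
    have h2 := hJ ((2:ℂ)⁻¹ • (u+v)) ((2:ℂ)⁻¹ • (u+v)) z a
    rw [e3, e4, hLzleft, add_zero] at h2
    rw [h2, ← h1]
  have hsub2 : ∀ x z w a : X, L x (z - w) a = L x z a - L x w a := by
    intro x z w a
    have h := hE x x z w a 0
    simp only [add_zero, sub_zero, sub_self, hLzleft, hLzright, smul_zero] at h
    rw [hadd1] at h
    have h2 : (2:ℂ) • (L x (z-w) a - (L x z a - L x w a)) = 0 := by rw [← h]; try module
    exact sub_eq_zero.mp (htwo _ h2)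
  have hadd2 : ∀ x z z' a : X, L x (z + z') a = L x z a + L x z' a := by
    intro x z z' a
    have hneg : L x (-z') a = - L x z' a := by
      have h := hsub2 x 0 z' a
      rw [zero_sub, hLzmid, zero_sub] at h
      exact h
    have h := hsub2 x z (-z') a
    rw [sub_neg_eq_add, hneg, sub_neg_eq_add] at h
    exact h
  have hadd3 : ∀ x z a a' : X, L x z (a + a') = L x z a + L x z a' := by
    intro x z a b
    have h := hE x x z 0 a b
    simp only [sub_zero, add_zero, sub_self, hLzmid, hLzleft, smul_zero] at h
    rw [hadd1] at h
    have h2 : (2:ℂ) • (L x z (a+b) - (L x z a + L x z b)) = 0 := by rw [← h]; try module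
    exact sub_eq_zero.mp (htwo _ h2)
  -- conclusion
  refine ⟨L, ⟨⟨hadd1, hadd2, hadd3⟩, hbound⟩, ?_⟩
  rintro L' ⟨⟨hadd', _, _⟩, hbound'⟩
  funext x z a
  have hhalf : ∀ u : X, L' u z a = (2:ℂ) • L' ((2:ℂ)⁻¹ • u) z a := by
    intro u
    have e : ((2:ℂ)⁻¹ • u) + ((2:ℂ)⁻¹ • u) = u := by module
    conv_lhs => rw [← e]
    rw [hadd', two_smul]
  have hiter : ∀ n : ℕ, L' x z a = (2:ℂ)^n • L' (((2:ℂ)⁻¹)^n • x) z a := by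
    intro n
    induction n with
    | zero => simp
    | succ n ih =>
      rw [ih, hhalf ((((2:ℂ)⁻¹))^n • x), smul_smul, smul_smul, ← pow_succ, ← pow_succ']
  have hdist : ∀ n : ℕ, ‖(2:ℂ)^n • f (((2:ℂ)⁻¹)^n • x) z a - L' x z a‖
      ≤ ((2 : ℝ) ^ r * θ / (2 * ((2 : ℝ) ^ r - 2)) * (‖x‖ ^ r * ‖z‖ ^ r * ‖a‖ ^ r)) * q^n := by
    intro n
    rw [hiter n, ← smul_sub, nsm]
    calc (2:ℝ)^n * ‖f (((2:ℂ)⁻¹)^n • x) z a - L' (((2:ℂ)⁻¹)^n • x) z a‖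
        ≤ (2:ℝ)^n * ((2 : ℝ) ^ r * θ / (2 * ((2 : ℝ) ^ r - 2))
            * (‖((2:ℂ)⁻¹)^n • x‖ ^ r * ‖z‖ ^ r * ‖a‖ ^ r)) :=
          mul_le_mul_of_nonneg_left (hbound' _ z a) (by positivity)
      _ = ((2 : ℝ) ^ r * θ / (2 * ((2 : ℝ) ^ r - 2)) * (‖x‖ ^ r * ‖z‖ ^ r * ‖a‖ ^ r)) * q^n := by
          rw [hcn, hqdef, mul_pow]; ring
  have htend' : Tendsto (fun n : ℕ => (2:ℂ)^n • f (((2:ℂ)⁻¹)^n • x) z a) atTop (𝓝 (L' x z a)) := by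
    rw [tendsto_iff_norm_sub_tendsto_zero]
    refine squeeze_zero (fun n => norm_nonneg _) hdist ?_
    simpa using (tendsto_pow_atTop_nhds_zero_of_lt_one hq0 hq1).const_mul
      ((2 : ℝ) ^ r * θ / (2 * ((2 : ℝ) ^ r - 2)) * (‖x‖ ^ r * ‖z‖ ^ r * ‖a‖ ^ r))
  exact tendsto_nhds_unique htend' (hL x z a)
end

section
/- Let A be a complex Banach algebra, s a fixed nonzero complex number with |s| < 1, r > 2 a real number, and θ ≥ 0. Suppose f : A³ → A satisfies f(x, 0, a) = f(0, z, a) = f(x, z, 0) = 0 for all x, z, a ∈ A and, for all λ, μ, η ∈ T¹ and all x, y, z, w, a, b ∈ A, ‖f(λ(x+y), μ(z−w), η(a+b)) + f(λ(x−y), μ(z+w), η(a−b)) − λμη(2f(x,z,a) − 2f(x,w,b) + 2f(y,z,b) − 2f(y,w,a))‖ ≤ ‖s · D₂f(x, y, z, w, a, b)‖ + θ(‖x‖^r + ‖y‖^r)(‖z‖^r + ‖w‖^r)(‖a‖^r + ‖b‖^r). Then there exists a unique ℂ-trilinear mapping D : A³ → A such that ‖f(x, z, a) − D(x, z, a)‖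 ≤ (2θ/(2^r − 2)) ‖x‖^r ‖z‖^r ‖a‖^r for all x, z, a ∈ A. If, in addition, f satisfies ‖f(xy, z, a) − f(x, z, a)y − x f(y, z, a)‖ ≤ θ(‖x‖^r + ‖y‖^r)‖z‖^r ‖a‖^r for all x, y, z, a ∈ A, and ‖f(x_{σ(1)}, x_{σ(2)}, x_{σ(3)}) − f(x₁, x₂, x₃)‖ ≤ θ ‖x₁‖^r ‖x₂‖^r ‖x₃‖^r for all x₁, x₂, x₃ ∈ A and every permutation (σ(1), σ(2), σ(3)) of (1,2,3), then D is a permuting triderivation. -/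
/-- A ℂ-trilinear `D : A³ → A` is a *permuting triderivation* if it is a derivation in the
first variable and is invariant under every permutation of its three variables. -/
def PermutingTriderivation {A : Type*} [Ring A] [Module ℂ A]
    (D : A → A → A → A) : Prop :=
  CTrilinear D ∧
  (∀ x y z w : A, D (x * y) z w = D x z w * y + x * D y z w) ∧
  (∀ (σ : Equiv.Perm (Fin 3)) (x : Fin 3 → A),
    D (x (σ 0)) (x (σ 1)) (x (σ 2)) = D (x 0) (x 1) (x 2))

open Filter Topology

lemma Complex.exists_norm_eq_one_add_eq_two_mul {c : ℂ} (hc : ‖c‖ ≤ 1) :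
    ∃ u v : ℂ, ‖u‖ = 1 ∧ ‖v‖ = 1 ∧ u + v = 2 * c := by
  set α := Real.arccos ‖c‖
  refine ⟨exp ((c.arg + α : ℝ) * I), exp ((c.arg - α : ℝ) * I),
    norm_exp_ofReal_mul_I _, norm_exp_ofReal_mul_I _, ?_⟩
  have hcos : Real.cos α = ‖c‖ := Real.cos_arccos (by linarith [norm_nonneg c]) hc
  calc exp ((c.arg + α : ℝ) * I) + exp ((c.arg - α : ℝ) * I)
      = exp (c.arg * I) * (2 * cos α) := by
        rw [two_cos, mul_add, ← exp_add, ← exp_add]; push_cast; ring_nf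
    _ = 2 * c := by
        rw [← ofReal_cos, hcos]; conv_rhs => rw [← norm_mul_exp_arg_mul_I c]
        ring

section Homogeneity

variable {M N : Type*} [AddCommGroup M] [Module ℂ M] [AddCommGroup N] [Module ℂ N]

lemma map_smul_of_map_add_of_map_unit_smul {g : M → N} (hadd : ∀ u v, g (u + v) = g u + g v)
    (hunit : ∀ l : ℂ, ‖l‖ = 1 → ∀ u, g (l • u) = l • g u) (c : ℂ) (u : M) :
    g (c • u) = c • g u := by
  have hnat : ∀ (n : ℕ) u, g ((n : ℂ) • u) = (n : ℂ) • g u := by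
    intro n u
    simpa [Nat.cast_smul_eq_nsmul] using map_nsmul (AddMonoidHom.mk' g hadd) n u
  have hsmall : ∀ d : ℂ, ‖d‖ ≤ 1 → ∀ u, g (d • u) = d • g u := by
    intro d hd u
    obtain ⟨p, q, hp, hq, hpq⟩ := Complex.exists_norm_eq_one_add_eq_two_mul hd
    apply smul_right_injective N (two_ne_zero' ℂ)
    have h2 := hnat 2 (d • u)
    simp only [Nat.cast_ofNat, smul_smul, ← hpq, add_smul, hadd, hunit p hp, hunit q hq] at h2 ⊢
    exact h2.symm
  obtain ⟨n, hn⟩ := exists_nat_ge ‖c‖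
  have hn1 : (0 : ℝ) < n + 1 := by positivity
  have hcn : ‖c / (n + 1 : ℕ)‖ ≤ 1 := by
    rw [norm_div, Complex.norm_natCast, div_le_one (by exact_mod_cast hn1)]; push_cast; linarith
  have hne : ((n + 1 : ℕ) : ℂ) ≠ 0 := Nat.cast_ne_zero.mpr n.succ_ne_zero
  have hsplit : c = ((n + 1 : ℕ) : ℂ) * (c / (n + 1 : ℕ)) := by field_simp
  rw [hsplit, mul_smul, hnat, hsmall _ hcn, ← mul_smul]

lemma map_add_of_jensen {φ : M → N} (h0 : φ 0 = 0)
    (hJ : ∀ x y, φ (x + y) + φ (x - y) = (2 : ℂ) • φ x) (u v : M) :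
    φ (u + v) = φ u + φ v := by
  have hdouble : ∀ x, φ ((2 : ℂ) • x) = (2 : ℂ) • φ x := fun x => by
    simpa [h0, two_smul] using hJ x x
  have hu : (2 : ℂ)⁻¹ • (u + v) + (2 : ℂ)⁻¹ • (u - v) = u := by module
  have hv : (2 : ℂ)⁻¹ • (u + v) - (2 : ℂ)⁻¹ • (u - v) = v := by module
  calc φ (u + v) = (2 : ℂ) • φ ((2 : ℂ)⁻¹ • (u + v)) := by
        rw [← hdouble, smul_inv_smul₀ (two_ne_zero' ℂ)]
    _ = φ u + φ v := by rw [← hJ, hu, hv]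

end Homogeneity

section Trilinear

variable {X Y : Type*} [AddCommGroup X] [Module ℂ X]

/-- The expression inside the norm on the left of the stability hypothesis, with
`(λ, μ, η) = (l, m, e)`. -/
def twistedD₁ [AddCommGroup Y] [Module ℂ Y] (f : X → X → X → Y) (l m e : ℂ) (x y z w a b : X) :
    Y :=
  f (l • (x + y)) (m • (z - w)) (e • (a + b)) + f (l • (x - y)) (m • (z + w)) (e • (a - b))
    - (l * m * e) • ((2 : ℂ) • f x z a - (2 : ℂ) • f x w b
        + (2 : ℂ) • f y z b - (2 : ℂ) • f y w a)

variable [AddCommGroup Y] [Module ℂ Y] {g : X → X → X → Y}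

lemma twistedD₁_one_one_one (x y z w a b : X) :
    twistedD₁ g 1 1 1 x y z w a b = D₁ g x y z w a b := by
  simp only [twistedD₁, D₁, one_smul, mul_one]
  abel

lemma CTrilinear.map_smul_smul_smul (hg : CTrilinear g) (c c' c'' : ℂ) (x z a : X) :
    g (c • x) (c' • z) (c'' • a) = (c * c' * c'') • g x z a := by
  rw [hg.2.1, hg.2.2.1, hg.2.2.2, smul_smul, smul_smul]

lemma CTrilinear.of_map_unit_smul (hadd : TriAdditive g)
    (hunit : ∀ l m e : ℂ, ‖l‖ = 1 → ‖m‖ = 1 → ‖e‖ = 1 → ∀ x z a,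
      g (l • x) (m • z) (e • a) = (l * m * e) • g x z a) :
    CTrilinear g := by
  obtain ⟨hadd₁, hadd₂, hadd₃⟩ := hadd
  refine ⟨⟨hadd₁, hadd₂, hadd₃⟩, fun c x z a => ?_, fun c x z a => ?_, fun c x z a => ?_⟩
  · refine map_smul_of_map_add_of_map_unit_smul (g := (g · z a)) (hadd₁ · · z a)
      (fun l hl u => ?_) c x
    simpa using hunit l 1 1 hl norm_one norm_one u z a
  · refine map_smul_of_map_add_of_map_unit_smul (g := (g x · a)) (hadd₂ x · · a)
      (fun m hm u => ?_) c z
    simpa using hunit 1 m 1 norm_one hm norm_one x u a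
  · refine map_smul_of_map_add_of_map_unit_smul (hadd₃ x z) (fun e he u => ?_) c a
    simpa using hunit 1 1 e norm_one norm_one he x z u

lemma triAdditive_of_D₁_eq_zero (h₁ : ∀ z a : X, g 0 z a = 0) (h₂ : ∀ x a : X, g x 0 a = 0)
    (h₃ : ∀ x z : X, g x z 0 = 0) (hD₁ : ∀ x y z w a b, D₁ g x y z w a b = 0) :
    TriAdditive g := by
  refine ⟨fun x x' z a => ?_, fun x z z' a => ?_, fun x z a a' => ?_⟩
  · refine map_add_of_jensen (φ := (g · z a)) (h₁ z a) (fun u v => ?_) x x'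
    have := hD₁ u v z 0 a 0
    simp only [D₁, h₂, h₃, sub_zero, add_zero, smul_zero] at this
    exact sub_eq_zero.mp this
  · refine map_add_of_jensen (φ := (g x · a)) (h₂ x a) (fun u v => ?_) z z'
    have := hD₁ x 0 u v a 0
    simp only [D₁, h₁, h₃, sub_zero, add_zero, smul_zero] at this
    rw [add_comm]
    exact sub_eq_zero.mp this
  · refine map_add_of_jensen (φ := (g x z ·)) (h₃ x z) (fun u v => ?_) a a'
    have := hD₁ x 0 z 0 u v
    simp only [D₁, h₁, h₂, sub_zero, add_zero, smul_zero] at this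
    exact sub_eq_zero.mp this

lemma CTrilinear.of_norm_twistedD₁_le {Y : Type*} [NormedAddCommGroup Y] [Module ℂ Y]
    {g : X → X → X → Y} {s : ℂ} (hs : ‖s‖ < 1) (h₁ : ∀ z a : X, g 0 z a = 0)
    (h₂ : ∀ x a : X, g x 0 a = 0) (h₃ : ∀ x z : X, g x z 0 = 0)
    (hle : ∀ l m e : ℂ, ‖l‖ = 1 → ‖m‖ = 1 → ‖e‖ = 1 → ∀ x y z w a b,
      ‖twistedD₁ g l m e x y z w a b‖ ≤ ‖s‖ * ‖D₁ g x y z w a b‖) :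
    CTrilinear g := by
  have hD₁ : ∀ x y z w a b, D₁ g x y z w a b = 0 := fun x y z w a b => by
    have := hle 1 1 1 norm_one norm_one norm_one x y z w a b
    rw [twistedD₁_one_one_one] at this
    exact norm_le_zero_iff.mp (by nlinarith [norm_nonneg (D₁ g x y z w a b)])
  refine .of_map_unit_smul (triAdditive_of_D₁_eq_zero h₁ h₂ h₃ hD₁)
    fun l m e hl hm he x z a => ?_
  -- at `y = w = b = 0` the twisted defect is `2 (g (l x) (m z) (e a) - l m e g x z a)`
  have := hle l m e hl hm he x 0 z 0 a 0
  rw [hD₁, norm_zero, mul_zero, norm_le_zero_iff] at this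
  simp only [twistedD₁, add_zero, sub_zero, h₁, h₂, smul_zero] at this
  apply smul_right_injective Y (two_ne_zero' ℂ)
  simp only [smul_comm (2 : ℂ) (l * m * e)]
  rw [two_smul, ← sub_eq_zero, this]

end Trilinear

lemma two_pow_mul_inv_two_rpow_lt_one {p : ℕ} {r : ℝ} (h : p < r) :
    (2 : ℝ) ^ p * ((2 : ℝ) ^ r)⁻¹ < 1 := by
  rw [← Real.rpow_natCast, ← div_eq_mul_inv, div_lt_one (by positivity)]
  exact Real.rpow_lt_rpow_of_exponent_lt one_lt_two h

lemma two_mul_inv_two_rpow_lt_one {r : ℝ} (hr : 1 < r) : 2 * ((2 : ℝ) ^ r)⁻¹ < 1 := by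
  simpa using two_pow_mul_inv_two_rpow_lt_one (p := 1) (by simpa using hr)

lemma tendsto_of_norm_sub_le_geometric {E : Type*} [SeminormedAddCommGroup E] {u : ℕ → E}
    {L : E} {C ρ : ℝ} (hρ₀ : 0 ≤ ρ) (hρ₁ : ρ < 1) (h : ∀ n, ‖u n - L‖ ≤ C * ρ ^ n) :
    Tendsto u atTop (𝓝 L) := by
  rw [tendsto_iff_norm_sub_tendsto_zero]
  refine squeeze_zero (fun n => norm_nonneg _) h ?_
  simpa using (tendsto_pow_atTop_nhds_zero_of_lt_one hρ₀ hρ₁).const_mul C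

section Rescale

variable {X Y : Type*} [NormedAddCommGroup X] [NormedSpace ℂ X]
  [NormedAddCommGroup Y] [NormedSpace ℂ Y] {φ : X → Y} {r K : ℝ}

noncomputable def rescale (φ : X → Y) (n : ℕ) (x : X) : Y := (2 : ℂ) ^ n • φ ((2 : ℂ)⁻¹ ^ n • x)

/-- `lim 2ⁿ φ (2⁻ⁿ x)`; a junk value when the sequence diverges. -/
noncomputable def limRescale (φ : X → Y) (x : X) : Y := limUnder atTop (rescale φ · x)

lemma norm_two_pow_smul (n : ℕ) (v : Y) : ‖(2 : ℂ) ^ n • v‖ = 2 ^ n * ‖v‖ := by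
  rw [norm_smul, norm_pow, Complex.norm_two]

lemma norm_inv_two_pow_smul_rpow (n : ℕ) (x : X) (r : ℝ) :
    ‖(2 : ℂ)⁻¹ ^ n • x‖ ^ r = ((2 : ℝ) ^ r)⁻¹ ^ n * ‖x‖ ^ r := by
  rw [norm_smul, norm_pow, norm_inv, Complex.norm_two,
    Real.mul_rpow (by positivity) (norm_nonneg x), ← Real.inv_rpow zero_le_two,
    ← Real.rpow_natCast, ← Real.rpow_natCast, ← Real.rpow_mul (by positivity),
    ← Real.rpow_mul (by positivity), mul_comm (n : ℝ) r, mul_comm]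

lemma dist_rescale_succ_le (hφ : ∀ x, ‖φ ((2 : ℂ) • x) - (2 : ℂ) • φ x‖ ≤ K * ‖x‖ ^ r)
    (n : ℕ) (x : X) :
    dist (rescale φ n x) (rescale φ (n + 1) x)
      ≤ K * ‖x‖ ^ r * ((2 : ℝ) ^ r)⁻¹ * (2 * ((2 : ℝ) ^ r)⁻¹) ^ n := by
  set y := (2 : ℂ)⁻¹ ^ (n + 1) • x
  have hdiff : rescale φ n x - rescale φ (n + 1) x
      = (2 : ℂ) ^ n • (φ ((2 : ℂ) • y) - (2 : ℂ) • φ y) := by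
    have hy : (2 : ℂ) • y = (2 : ℂ)⁻¹ ^ n • x := by
      rw [smul_smul, pow_succ, mul_comm, mul_assoc, inv_mul_cancel₀ two_ne_zero, mul_one]
    rw [rescale, rescale, hy]
    module
  calc dist (rescale φ n x) (rescale φ (n + 1) x)
      = 2 ^ n * ‖φ ((2 : ℂ) • y) - (2 : ℂ) • φ y‖ := by
        rw [dist_eq_norm, hdiff, norm_two_pow_smul]
    _ ≤ 2 ^ n * (K * ‖y‖ ^ r) := by gcongr; exact hφ y
    _ = K * ‖x‖ ^ r * ((2 : ℝ) ^ r)⁻¹ * (2 * ((2 : ℝ) ^ r)⁻¹) ^ n := by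
        rw [norm_inv_two_pow_smul_rpow]; ring

lemma tendsto_rescale_of_norm_sub_le {ψ : X → Y} {M : ℝ} (hr : 1 < r)
    (hψ : ∀ (c : ℂ) x, ψ (c • x) = c • ψ x) (h : ∀ x, ‖φ x - ψ x‖ ≤ M * ‖x‖ ^ r) (x : X) :
    Tendsto (rescale φ · x) atTop (𝓝 (ψ x)) := by
  refine tendsto_of_norm_sub_le_geometric (C := M * ‖x‖ ^ r) (by positivity)
    (two_mul_inv_two_rpow_lt_one hr) fun n => ?_
  have hdiff : rescale φ n x - ψ x
      = (2 : ℂ) ^ n • (φ ((2 : ℂ)⁻¹ ^ n • x) - ψ ((2 : ℂ)⁻¹ ^ n • x)) := by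
    rw [rescale, smul_sub, hψ, smul_smul, ← mul_pow, mul_inv_cancel₀ two_ne_zero, one_pow,
      one_smul]
  calc ‖rescale φ n x - ψ x‖ = 2 ^ n * ‖φ ((2 : ℂ)⁻¹ ^ n • x) - ψ ((2 : ℂ)⁻¹ ^ n • x)‖ := by
        rw [hdiff, norm_two_pow_smul]
    _ ≤ 2 ^ n * (M * ‖(2 : ℂ)⁻¹ ^ n • x‖ ^ r) := by gcongr; exact h _
    _ = M * ‖x‖ ^ r * (2 * ((2 : ℝ) ^ r)⁻¹) ^ n := by
        rw [norm_inv_two_pow_smul_rpow]; ring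

variable [CompleteSpace Y]

lemma tendsto_rescale_limRescale (hr : 1 < r)
    (hφ : ∀ x, ‖φ ((2 : ℂ) • x) - (2 : ℂ) • φ x‖ ≤ K * ‖x‖ ^ r) (x : X) :
    Tendsto (rescale φ · x) atTop (𝓝 (limRescale φ x)) :=
  tendsto_nhds_limUnder <| cauchySeq_tendsto_of_complete <| cauchySeq_of_le_geometric _ _
    (two_mul_inv_two_rpow_lt_one hr) (dist_rescale_succ_le hφ · x)

lemma norm_sub_limRescale_le (hr : 1 < r)
    (hφ : ∀ x, ‖φ ((2 : ℂ) • x) - (2 : ℂ) • φ x‖ ≤ K * ‖x‖ ^ r) (x : X) :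
    ‖φ x - limRescale φ x‖ ≤ K / ((2 : ℝ) ^ r - 2) * ‖x‖ ^ r := by
  have h := dist_le_of_le_geometric_of_tendsto₀ _ _ (two_mul_inv_two_rpow_lt_one hr)
    (dist_rescale_succ_le hφ · x) (tendsto_rescale_limRescale hr hφ x)
  rw [dist_eq_norm] at h
  convert h using 1
  · simp [rescale]
  · have : (2 : ℝ) < 2 ^ r := by
      simpa using Real.rpow_lt_rpow_of_exponent_lt one_lt_two hr
    field_simp

end Rescale

section Stability

variable {X Y : Type*} [NormedAddCommGroup X] [NormedSpace ℂ X]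
  [NormedAddCommGroup Y] [NormedSpace ℂ Y] {f D : X → X → X → Y} {s : ℂ} {r θ B : ℝ}

lemma norm_map_two_smul_sub_le (hr : r ≠ 0) (h₁ : ∀ z a : X, f 0 z a = 0)
    (h₂ : ∀ x a : X, f x 0 a = 0) (h₃ : ∀ x z : X, f x z 0 = 0)
    (hineq : ∀ x y z w a b : X, ‖D₁ f x y z w a b‖ ≤ ‖s • D₂ f x y z w a b‖
      + θ * (‖x‖ ^ r + ‖y‖ ^ r) * (‖z‖ ^ r + ‖w‖ ^ r) * (‖a‖ ^ r + ‖b‖ ^ r))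
    (x z a : X) :
    ‖f ((2 : ℂ) • x) z a - (2 : ℂ) • f x z a‖ ≤ 2 * θ * (‖z‖ ^ r * ‖a‖ ^ r) * ‖x‖ ^ r := by
  have h := hineq x x z 0 a 0
  have hhalf : (2 : ℂ)⁻¹ • (x + x) = x := by module
  simp only [D₁, D₂, hhalf, sub_self, sub_zero, add_zero, smul_zero, h₁, h₂, h₃,
    norm_zero, Real.zero_rpow hr] at h
  rw [two_smul]
  calc _ ≤ _ := h
    _ = _ := by ring

lemma twistedD₁_rescale (n : ℕ) (l m e : ℂ) (x y z w a b : X) :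
    twistedD₁ (fun x z a => rescale (f · z a) n x) l m e x y z w a b
      = (2 : ℂ) ^ n • twistedD₁ f l m e ((2 : ℂ)⁻¹ ^ n • x) ((2 : ℂ)⁻¹ ^ n • y) z w a b := by
  have hsum : (2 : ℂ)⁻¹ ^ n • l • (x + y) = l • ((2 : ℂ)⁻¹ ^ n • x + (2 : ℂ)⁻¹ ^ n • y) := by
    module
  have hdiff : (2 : ℂ)⁻¹ ^ n • l • (x - y) = l • ((2 : ℂ)⁻¹ ^ n • x - (2 : ℂ)⁻¹ ^ n • y) := by
    module
  simp only [twistedD₁, rescale, hsum, hdiff]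
  module

lemma two_pow_smul_D₂ (n : ℕ) (x y z w a b : X) :
    (2 : ℂ) ^ n • D₂ f ((2 : ℂ)⁻¹ ^ n • x) ((2 : ℂ)⁻¹ ^ n • y) z w a b
      = rescale (f · (z - w) (a + b)) (n + 1) (x + y)
        + rescale (f · (z + w) (a - b)) (n + 1) (x - y)
        - (2 : ℂ) • rescale (f · z a) n x + (2 : ℂ) • rescale (f · w b) n x
        - (2 : ℂ) • rescale (f · z b) n y + (2 : ℂ) • rescale (f · w a) n y := by
  have hsum : (2 : ℂ)⁻¹ • ((2 : ℂ)⁻¹ ^ n • x + (2 : ℂ)⁻¹ ^ n • y)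
      = (2 : ℂ)⁻¹ ^ (n + 1) • (x + y) := by module
  have hdiff : (2 : ℂ)⁻¹ • ((2 : ℂ)⁻¹ ^ n • x - (2 : ℂ)⁻¹ ^ n • y)
      = (2 : ℂ)⁻¹ ^ (n + 1) • (x - y) := by module
  simp only [D₂, rescale, hsum, hdiff]
  module

lemma tendsto_twistedD₁ {F : ℕ → X → X → X → Y}
    (hF : ∀ x z a, Tendsto (F · x z a) atTop (𝓝 (D x z a))) (l m e : ℂ) (x y z w a b : X) :
    Tendsto (fun n => twistedD₁ (F n) l m e x y z w a b) atTop
      (𝓝 (twistedD₁ D l m e x y z w a b)) :=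
  ((hF _ _ _).add (hF _ _ _)).sub <| Tendsto.const_smul (((((hF _ _ _).const_smul _).sub
    ((hF _ _ _).const_smul _)).add ((hF _ _ _).const_smul _)).sub ((hF _ _ _).const_smul _)) _

lemma norm_twistedD₁_le_of_tendsto (hr : 1 < r)
    (hD : ∀ x z a, Tendsto (rescale (f · z a) · x) atTop (𝓝 (D x z a)))
    (hineq : ∀ l m e : ℂ, ‖l‖ = 1 → ‖m‖ = 1 → ‖e‖ = 1 → ∀ x y z w a b : X,
      ‖twistedD₁ f l m e x y z w a b‖ ≤ ‖s • D₂ f x y z w a b‖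
        + θ * (‖x‖ ^ r + ‖y‖ ^ r) * (‖z‖ ^ r + ‖w‖ ^ r) * (‖a‖ ^ r + ‖b‖ ^ r))
    (l m e : ℂ) (hl : ‖l‖ = 1) (hm : ‖m‖ = 1) (he : ‖e‖ = 1) (x y z w a b : X) :
    ‖twistedD₁ D l m e x y z w a b‖ ≤ ‖s‖ * ‖D₁ D x y z w a b‖ := by
  set u : ℕ → X := fun n => (2 : ℂ)⁻¹ ^ n • x
  set v : ℕ → X := fun n => (2 : ℂ)⁻¹ ^ n • y
  have hlim₁ := tendsto_twistedD₁ (F := fun n x z a => rescale (f · z a) n x) hD l m e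
    x y z w a b
  have hlim₂ : Tendsto (fun n => (2 : ℂ) ^ n • D₂ f (u n) (v n) z w a b) atTop
      (𝓝 (D₁ D x y z w a b)) := by
    simp only [u, v, two_pow_smul_D₂]
    have hsucc (x z a : X) := (hD x z a).comp (tendsto_add_atTop_nat 1)
    exact (((((hsucc _ _ _).add (hsucc _ _ _)).sub ((hD _ _ _).const_smul _)).add
      ((hD _ _ _).const_smul _)).sub ((hD _ _ _).const_smul _)).add ((hD _ _ _).const_smul _)
  set C := θ * (‖x‖ ^ r + ‖y‖ ^ r) * (‖z‖ ^ r + ‖w‖ ^ r) * (‖a‖ ^ r + ‖b‖ ^ r)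
  have hC : Tendsto (fun n : ℕ => C * (2 * ((2 : ℝ) ^ r)⁻¹) ^ n) atTop (𝓝 0) := by
    simpa using (tendsto_pow_atTop_nhds_zero_of_lt_one (by positivity)
      (two_mul_inv_two_rpow_lt_one hr)).const_mul C
  refine le_of_tendsto_of_tendsto' hlim₁.norm (by simpa using (hlim₂.norm.const_mul _).add hC)
    fun n => ?_
  rw [twistedD₁_rescale, norm_two_pow_smul, norm_two_pow_smul]
  calc 2 ^ n * ‖twistedD₁ f l m e (u n) (v n) z w a b‖
      ≤ 2 ^ n * (‖s • D₂ f (u n) (v n) z w a b‖ + θ * (‖u n‖ ^ r + ‖v n‖ ^ r)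
        * (‖z‖ ^ r + ‖w‖ ^ r) * (‖a‖ ^ r + ‖b‖ ^ r)) := by
        gcongr; exact hineq l m e hl hm he _ _ z w a b
    _ = _ := by simp only [u, v, norm_smul s, norm_inv_two_pow_smul_rpow, C]; ring

lemma CTrilinear.tendsto_rescale (hD : CTrilinear D) (hr : 1 < r)
    (hbd : ∀ x z a, ‖f x z a - D x z a‖ ≤ B * (‖x‖ ^ r * ‖z‖ ^ r * ‖a‖ ^ r)) (x z a : X) :
    Tendsto (rescale (f · z a) · x) atTop (𝓝 (D x z a)) :=
  tendsto_rescale_of_norm_sub_le (M := B * (‖z‖ ^ r * ‖a‖ ^ r)) hr (hD.2.1 · · z a)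
    (fun u => (hbd u z a).trans_eq (by ring)) x

lemma CTrilinear.map_perm_eq (hD : CTrilinear D) (hr : 1 < r)
    (hbd : ∀ x z a, ‖f x z a - D x z a‖ ≤ B * (‖x‖ ^ r * ‖z‖ ^ r * ‖a‖ ^ r))
    (hperm : ∀ (σ : Equiv.Perm (Fin 3)) (x : Fin 3 → X),
      ‖f (x (σ 0)) (x (σ 1)) (x (σ 2)) - f (x 0) (x 1) (x 2)‖
        ≤ θ * ‖x 0‖ ^ r * ‖x 1‖ ^ r * ‖x 2‖ ^ r)
    (σ : Equiv.Perm (Fin 3)) (x : Fin 3 → X) :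
    D (x (σ 0)) (x (σ 1)) (x (σ 2)) = D (x 0) (x 1) (x 2) := by
  set P : (Fin 3 → X) → Y := fun u => D (u (σ 0)) (u (σ 1)) (u (σ 2)) - D (u 0) (u 1) (u 2)
  have hprod (u : Fin 3 → X) :
      ‖u (σ 0)‖ ^ r * ‖u (σ 1)‖ ^ r * ‖u (σ 2)‖ ^ r = ‖u 0‖ ^ r * ‖u 1‖ ^ r * ‖u 2‖ ^ r := by
    simpa only [Fin.prod_univ_three] using Equiv.prod_comp σ (fun i => ‖u i‖ ^ r)
  have hP (u : Fin 3 → X) : ‖P u‖ ≤ (2 * B + θ) * (‖u 0‖ ^ r * ‖u 1‖ ^ r * ‖u 2‖ ^ r) := by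
    have hsplit : P u = (f (u (σ 0)) (u (σ 1)) (u (σ 2)) - f (u 0) (u 1) (u 2))
        - (f (u (σ 0)) (u (σ 1)) (u (σ 2)) - D (u (σ 0)) (u (σ 1)) (u (σ 2)))
        + (f (u 0) (u 1) (u 2) - D (u 0) (u 1) (u 2)) := by simp only [P]; abel
    rw [hsplit]
    refine (norm_add_le _ _).trans <| (by gcongr; exact norm_sub_le _ _ : _ ≤ _ + _ + _).trans ?_
    have := hbd (u (σ 0)) (u (σ 1)) (u (σ 2))
    have := hbd (u 0) (u 1) (u 2)
    have := hperm σ u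
    rw [hprod] at *
    linarith
  have hscale (c : ℂ) (u : Fin 3 → X) : P (c • u) = (c * c * c) • P u := by
    simp only [P, Pi.smul_apply, hD.map_smul_smul_smul, smul_sub]
  have hx (n : ℕ) : x = (2 : ℂ) ^ n • (2 : ℂ)⁻¹ ^ n • x := by
    rw [smul_smul, ← mul_pow, mul_inv_cancel₀ two_ne_zero, one_pow, one_smul]
  have hρ : (2 * ((2 : ℝ) ^ r)⁻¹) ^ 3 < 1 :=
    pow_lt_one₀ (by positivity) (two_mul_inv_two_rpow_lt_one hr) three_ne_zero
  rw [← sub_eq_zero]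
  refine tendsto_nhds_unique tendsto_const_nhds (tendsto_of_norm_sub_le_geometric
    (C := (2 * B + θ) * (‖x 0‖ ^ r * ‖x 1‖ ^ r * ‖x 2‖ ^ r)) (by positivity) hρ fun n => ?_)
  calc ‖P x - 0‖ = 2 ^ n * (2 ^ n * (2 ^ n * ‖P ((2 : ℂ)⁻¹ ^ n • x)‖)) := by
        conv_lhs => rw [sub_zero, hx n, hscale, mul_smul, mul_smul, norm_two_pow_smul,
          norm_two_pow_smul, norm_two_pow_smul]
    _ ≤ 2 ^ n * (2 ^ n * (2 ^ n * ((2 * B + θ) * (‖(2 : ℂ)⁻¹ ^ n • x 0‖ ^ r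
          * ‖(2 : ℂ)⁻¹ ^ n • x 1‖ ^ r * ‖(2 : ℂ)⁻¹ ^ n • x 2‖ ^ r)))) := by
        gcongr; exact hP _
    _ = _ := by rw [← pow_mul, mul_pow]; simp only [norm_inv_two_pow_smul_rpow]; ring

end Stability

lemma CTrilinear.map_mul_eq {A : Type*} [NormedRing A] [NormedAlgebra ℂ A]
    {f D : A → A → A → A} {r θ B : ℝ} (hD : CTrilinear D) (hr : 2 < r)
    (hbd : ∀ x z a, ‖f x z a - D x z a‖ ≤ B * (‖x‖ ^ r * ‖z‖ ^ r * ‖a‖ ^ r))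
    (hder : ∀ x y z a : A, ‖f (x * y) z a - f x z a * y - x * f y z a‖
      ≤ θ * (‖x‖ ^ r + ‖y‖ ^ r) * ‖z‖ ^ r * ‖a‖ ^ r)
    (x y z w : A) :
    D (x * y) z w = D x z w * y + x * D y z w := by
  set G : ℕ → A → A := fun n u => rescale (f · z w) n u
  have hG (u : A) : Tendsto (G · u) atTop (𝓝 (D u z w)) :=
    hD.tendsto_rescale (by linarith) hbd u z w
  have hprod : Tendsto (fun n => G n x * y + x * G n y) atTop
      (𝓝 (D x z w * y + x * D y z w)) := ((hG x).mul_const y).add ((hG y).const_mul x)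
  set u : ℕ → A := fun n => (2 : ℂ)⁻¹ ^ n • x
  set v : ℕ → A := fun n => (2 : ℂ)⁻¹ ^ n • y
  have hdefect (n : ℕ) : G (2 * n) (x * y) - (G n x * y + x * G n y)
      = (2 : ℂ) ^ (2 * n) • (f (u n * v n) z w - f (u n) z w * v n - u n * f (v n) z w) := by
    have harg : u n * v n = (2 : ℂ)⁻¹ ^ (2 * n) • (x * y) := by
      rw [smul_mul_smul, ← pow_add, two_mul]
    have hpow : (2 : ℂ) ^ (2 * n) * (2 : ℂ)⁻¹ ^ n = 2 ^ n := by
      rw [two_mul, pow_add, mul_assoc, ← mul_pow, mul_inv_cancel₀ two_ne_zero, one_pow, mul_one]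
    rw [harg]
    simp only [G, u, v, rescale, mul_smul_comm, smul_mul_assoc, smul_smul, hpow, smul_sub]
    abel
  have hdefect_lim :
      Tendsto (fun n => G (2 * n) (x * y) - (G n x * y + x * G n y)) atTop (𝓝 0) := by
    refine tendsto_of_norm_sub_le_geometric (C := θ * (‖x‖ ^ r + ‖y‖ ^ r) * ‖z‖ ^ r * ‖w‖ ^ r)
      (ρ := 2 ^ 2 * ((2 : ℝ) ^ r)⁻¹) (by positivity)
      (two_pow_mul_inv_two_rpow_lt_one (by exact_mod_cast hr)) fun n => ?_
    calc _ = 2 ^ n * (2 ^ n * ‖f (u n * v n) z w - f (u n) z w * v n - u n * f (v n) z w‖) := by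
          rw [sub_zero, hdefect, two_mul, pow_add, mul_smul, norm_two_pow_smul,
            norm_two_pow_smul]
      _ ≤ 2 ^ n * (2 ^ n * (θ * (‖u n‖ ^ r + ‖v n‖ ^ r) * ‖z‖ ^ r * ‖w‖ ^ r)) := by
          gcongr; exact hder _ _ _ _
      _ = _ := by rw [mul_pow, ← pow_mul]; simp only [u, v, norm_inv_two_pow_smul_rpow]; ring
  have hsub : Tendsto (fun n => G (2 * n) (x * y)) atTop (𝓝 (D (x * y) z w)) :=
    (hG (x * y)).comp (tendsto_id.const_mul_atTop' two_pos)
  refine tendsto_nhds_unique hsub ?_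
  simpa using hprod.add hdefect_lim

variable {A : Type*} [NormedRing A] [NormedAlgebra ℂ A] [CompleteSpace A]

theorem stmt_7_general (s : ℂ) (hs1 : ‖s‖ < 1) (r θ : ℝ) (hr : 2 < r)
    (f : A → A → A → A)
    (hzero : ∀ x z a : A, f x 0 a = 0 ∧ f 0 z a = 0 ∧ f x z 0 = 0)
    (hineq : ∀ l m e : ℂ, ‖l‖ = 1 → ‖m‖ = 1 → ‖e‖ = 1 → ∀ x y z w a b : A,
      ‖f (l • (x + y)) (m • (z - w)) (e • (a + b))
          + f (l • (x - y)) (m • (z + w)) (e • (a - b))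
          - (l * m * e) • ((2 : ℂ) • f x z a - (2 : ℂ) • f x w b
              + (2 : ℂ) • f y z b - (2 : ℂ) • f y w a)‖
        ≤ ‖s • D₂ f x y z w a b‖ + θ * (‖x‖ ^ r + ‖y‖ ^ r) * (‖z‖ ^ r + ‖w‖ ^ r) * (‖a‖ ^ r + ‖b‖ ^ r)) :
    (∃! D : A → A → A → A, CTrilinear D ∧
      ∀ x z a : A, ‖f x z a - D x z a‖ ≤ 2 * θ / ((2 : ℝ) ^ r - 2) * (‖x‖ ^ r * ‖z‖ ^ r * ‖a‖ ^ r)) ∧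
    ((∀ x y z a : A,
      ‖f (x * y) z a - f x z a * y - x * f y z a‖
        ≤ θ * (‖x‖ ^ r + ‖y‖ ^ r) * ‖z‖ ^ r * ‖a‖ ^ r) →
     (∀ (σ : Equiv.Perm (Fin 3)) (x : Fin 3 → A),
      ‖f (x (σ 0)) (x (σ 1)) (x (σ 2)) - f (x 0) (x 1) (x 2)‖
        ≤ θ * ‖x 0‖ ^ r * ‖x 1‖ ^ r * ‖x 2‖ ^ r) →
     ∀ D : A → A → A → A,
       (CTrilinear D ∧ ∀ x z a : A, ‖f x z a - D x z a‖ ≤ 2 * θ / ((2 : ℝ) ^ r - 2) * (‖x‖ ^ r * ‖z‖ ^ r * ‖a‖ ^ r)) →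
       PermutingTriderivation D) := by
  have hr₁ : 1 < r := by linarith
  have h₁ (z a : A) : f 0 z a = 0 := (hzero 0 z a).2.1
  have h₂ (x a : A) : f x 0 a = 0 := (hzero x 0 a).1
  have h₃ (x z : A) : f x z 0 = 0 := (hzero x z 0).2.2
  have hdouble := norm_map_two_smul_sub_le (s := s) (θ := θ) (by linarith) h₁ h₂ h₃
    fun x y z w a b => by
      rw [← twistedD₁_one_one_one]; exact hineq 1 1 1 norm_one norm_one norm_one x y z w a b
  set D : A → A → A → A := fun x z a => limRescale (f · z a) x
  have hD (x z a : A) : Tendsto (rescale (f · z a) · x) atTop (𝓝 (D x z a)) :=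
    tendsto_rescale_limRescale hr₁ (hdouble · z a) x
  have hbd (x z a : A) :
      ‖f x z a - D x z a‖ ≤ 2 * θ / ((2 : ℝ) ^ r - 2) * (‖x‖ ^ r * ‖z‖ ^ r * ‖a‖ ^ r) := by
    refine (norm_sub_limRescale_le (φ := (f · z a)) hr₁ (hdouble · z a) x).trans_eq ?_
    ring
  have hD_eq_zero (x z a : A) (h : ∀ n, rescale (f · z a) n x = 0) : D x z a = 0 :=
    tendsto_nhds_unique (hD x z a) (by simp only [h]; exact tendsto_const_nhds)
  have hlin : CTrilinear D := CTrilinear.of_norm_twistedD₁_le hs1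
    (fun z a => hD_eq_zero 0 z a fun n => by simp [rescale, h₁])
    (fun x a => hD_eq_zero x 0 a fun n => by simp [rescale, h₂])
    (fun x z => hD_eq_zero x z 0 fun n => by simp [rescale, h₃])
    (norm_twistedD₁_le_of_tendsto hr₁ hD hineq)
  refine ⟨⟨D, ⟨hlin, hbd⟩, fun D' hD' => ?_⟩, fun hder hperm D' hD' => ?_⟩
  · ext x z a
    exact tendsto_nhds_unique (hD'.1.tendsto_rescale hr₁ hD'.2 x z a) (hD x z a)
  · exact ⟨hD'.1, hD'.1.map_mul_eq hr hD'.2 hder, hD'.1.map_perm_eq hr₁ hD'.2 hperm⟩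

theorem stmt_7 (s : ℂ) (hs0 : s ≠ 0) (hs1 : ‖s‖ < 1) (r θ : ℝ) (hr : 2 < r) (hθ : 0 ≤ θ)
    (f : A → A → A → A)
    (hzero : ∀ x z a : A, f x 0 a = 0 ∧ f 0 z a = 0 ∧ f x z 0 = 0)
    (hineq : ∀ l m e : ℂ, ‖l‖ = 1 → ‖m‖ = 1 → ‖e‖ = 1 → ∀ x y z w a b : A,
      ‖f (l • (x + y)) (m • (z - w)) (e • (a + b))
          + f (l • (x - y)) (m • (z + w)) (e • (a - b))
          - (l * m * e) • ((2 : ℂ) • f x z a - (2 : ℂ) • f x w b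
              + (2 : ℂ) • f y z b - (2 : ℂ) • f y w a)‖
        ≤ ‖s • D₂ f x y z w a b‖ + θ * (‖x‖ ^ r + ‖y‖ ^ r) * (‖z‖ ^ r + ‖w‖ ^ r) * (‖a‖ ^ r + ‖b‖ ^ r)) :
    (∃! D : A → A → A → A, CTrilinear D ∧
      ∀ x z a : A, ‖f x z a - D x z a‖ ≤ 2 * θ / ((2 : ℝ) ^ r - 2) * (‖x‖ ^ r * ‖z‖ ^ r * ‖a‖ ^ r)) ∧
    ((∀ x y z a : A,
      ‖f (x * y) z a - f x z a * y - x * f y z a‖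
        ≤ θ * (‖x‖ ^ r + ‖y‖ ^ r) * ‖z‖ ^ r * ‖a‖ ^ r) →
     (∀ (σ : Equiv.Perm (Fin 3)) (x : Fin 3 → A),
      ‖f (x (σ 0)) (x (σ 1)) (x (σ 2)) - f (x 0) (x 1) (x 2)‖
        ≤ θ * ‖x 0‖ ^ r * ‖x 1‖ ^ r * ‖x 2‖ ^ r) →
     ∀ D : A → A → A → A,
       (CTrilinear D ∧ ∀ x z a : A, ‖f x z a - D x z a‖ ≤ 2 * θ / ((2 : ℝ) ^ r - 2) * (‖x‖ ^ r * ‖z‖ ^ r * ‖a‖ ^ r)) →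
       PermutingTriderivation D) :=
  stmt_7_general s hs1 r θ hr f hzero hineq
end
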